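/- arXiv:1312.1231 — 12 statements merged into one kernel-verified Lean document; each statement's English description precedes it below -/
import Mathlib

section
/- Radius Function Lemma: Let X ⊆ ℝⁿ be finite, E ⊆ X, Q ⊆ X nonempty, and r ≥ 0. Suppose there exists a sphere including Q and excluding E (i.e., a center z and ρ ≥ 0 with dist(z,q) ≤ ρ for all q ∈ Q and dist(z,e) ≥ ρ for all e ∈ E). Then Q belongs to the selective Delaunay complex Del(r,X,E) if and only if the infimum of squared radii ρ² over all such spheres is at most r². -/
/-- **Radius Function Lemma.**
Let `X ⊆ ℝⁿ` be finite, `E ⊆ X`, `Q ⊆ X` nonempty, `r ≥ 0`, and suppose some sphere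
includes `Q` and excludes `E`.  Then `Q ∈ Del(r, X, E)` (i.e. the Voronoi balls
`Vor_r(x, E)`, `x ∈ Q`, have a common point) iff the infimum of the squared radii `ρ²`
over all spheres including `Q` and excluding `E` is at most `r²`. -/
theorem radius_function_lemma (n : ℕ)
    (X E Q : Finset (EuclideanSpace ℝ (Fin n))) (hEX : E ⊆ X) (hQX : Q ⊆ X)
    (hQ : Q.Nonempty) (r : ℝ) (hr : 0 ≤ r)
    (hfeas : ∃ (z : EuclideanSpace ℝ (Fin n)) (ρ : ℝ), 0 ≤ ρ ∧
      (∀ q ∈ Q, dist z q ≤ ρ) ∧ ∀ e ∈ E, ρ ≤ dist z e) :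
    (∃ y : EuclideanSpace ℝ (Fin n),
        ∀ x ∈ Q, dist y x ≤ r ∧ ∀ e ∈ E, dist y x ≤ dist y e) ↔
      sInf {s : ℝ | ∃ (z : EuclideanSpace ℝ (Fin n)) (ρ : ℝ), 0 ≤ ρ ∧ s = ρ ^ 2 ∧
        (∀ q ∈ Q, dist z q ≤ ρ) ∧ ∀ e ∈ E, ρ ≤ dist z e} ≤ r ^ 2 := by
  classical
  obtain ⟨q₀, hq₀⟩ := hQ
  set S : Set ℝ := {s : ℝ | ∃ (z : EuclideanSpace ℝ (Fin n)) (ρ : ℝ), 0 ≤ ρ ∧ s = ρ ^ 2 ∧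
        (∀ q ∈ Q, dist z q ≤ ρ) ∧ ∀ e ∈ E, ρ ≤ dist z e} with hS
  have hSbdd : BddBelow S := by
    refine ⟨0, fun s hs => ?_⟩
    obtain ⟨z, ρ, _, rfl, _, _⟩ := hs
    positivity
  have hSne : S.Nonempty := by
    obtain ⟨z, ρ, h0, h1, h2⟩ := hfeas
    exact ⟨ρ ^ 2, z, ρ, h0, rfl, h1, h2⟩
  set g : EuclideanSpace ℝ (Fin n) → ℝ := fun y => Q.sup' ⟨q₀, hq₀⟩ (fun q => dist y q)
    with hgdef
  have hgcont : Continuous g :=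
    Continuous.finset_sup'_apply (f := fun (q : EuclideanSpace ℝ (Fin n)) y => dist y q)
      ⟨q₀, hq₀⟩ fun q _ => continuous_id.dist continuous_const
  have hgnn : ∀ y, 0 ≤ g y := fun y =>
    le_trans dist_nonneg (Finset.le_sup' (fun q => dist y q) hq₀)
  set F : Set (EuclideanSpace ℝ (Fin n)) :=
    {y | ∀ q ∈ Q, ∀ e ∈ E, dist y q ≤ dist y e} with hF
  have hFclosed : IsClosed F := by
    have : F = ⋂ q ∈ Q, ⋂ e ∈ E, {y | dist y q ≤ dist y e} := by
      ext y; simp [hF]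
    rw [this]
    exact isClosed_biInter fun q _ => isClosed_biInter fun e _ =>
      isClosed_le (continuous_id.dist continuous_const) (continuous_id.dist continuous_const)
  obtain ⟨z₀, ρ₀, hρ₀0, hincl₀, hexcl₀⟩ := hfeas
  have hz₀F : z₀ ∈ F := fun q hq e he => le_trans (hincl₀ q hq) (hexcl₀ e he)
  set K : Set (EuclideanSpace ℝ (Fin n)) := F ∩ Metric.closedBall q₀ (g z₀) with hK
  have hKcpt : IsCompact K :=
    (isCompact_closedBall q₀ (g z₀)).inter_left hFclosed
  have hz₀K : z₀ ∈ K := by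
    refine ⟨hz₀F, ?_⟩
    rw [Metric.mem_closedBall]
    exact Finset.le_sup' (fun q => dist z₀ q) hq₀
  obtain ⟨y₀, hy₀K, hy₀min⟩ := hKcpt.exists_isMinOn ⟨z₀, hz₀K⟩ hgcont.continuousOn
  have hminF : ∀ y ∈ F, g y₀ ≤ g y := by
    intro y hyF
    by_cases h : dist q₀ y ≤ g z₀
    · exact hy₀min ⟨hyF, Metric.mem_closedBall'.mpr h⟩
    · push_neg at h
      calc g y₀ ≤ g z₀ := hy₀min hz₀K
        _ ≤ dist q₀ y := h.le
        _ = dist y q₀ := dist_comm _ _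
        _ ≤ g y := Finset.le_sup' (fun q => dist y q) hq₀
  have hlb : ∀ s ∈ S, g y₀ ^ 2 ≤ s := by
    rintro s ⟨z, ρ, hρ0, rfl, hincl, hexcl⟩
    have hzF : z ∈ F := fun q hq e he => le_trans (hincl q hq) (hexcl e he)
    have h1 : g y₀ ≤ ρ := le_trans (hminF z hzF) (Finset.sup'_le _ _ hincl)
    exact pow_le_pow_left₀ (hgnn y₀) h1 2
  constructor
  · rintro ⟨y, hy⟩
    have hmem : g y ^ 2 ∈ S := by
      refine ⟨y, g y, hgnn y, rfl, fun q hq => Finset.le_sup' _ hq, fun e he => ?_⟩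
      obtain ⟨q, hq, hqe⟩ := Finset.exists_mem_eq_sup' ⟨q₀, hq₀⟩ (fun q => dist y q)
      calc g y = dist y q := hqe
        _ ≤ dist y e := (hy q hq).2 e he
    have h1 : g y ≤ r := Finset.sup'_le _ _ fun q hq => (hy q hq).1
    exact le_trans (csInf_le hSbdd hmem) (pow_le_pow_left₀ (hgnn y) h1 2)
  · intro h
    have h1 : g y₀ ^ 2 ≤ r ^ 2 := le_trans (le_csInf hSne hlb) h
    have h2 : g y₀ ≤ r := by nlinarith [hgnn y₀]
    refine ⟨y₀, fun x hx => ⟨le_trans (Finset.le_sup' (fun q => dist y₀ q) hx) h2,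
      fun e he => hy₀K.1 x hx e he⟩⟩
end

section
/- KKT sufficiency for the smallest enclosing/excluding sphere: Let Q, E ⊆ ℝⁿ be finite, and let S be a sphere with center z and squared radius s that includes Q (‖z−q‖² ≤ s for q ∈ Q) and excludes E (‖z−e‖² ≥ s for e ∈ E). Suppose there exist reals λ_x for x ∈ Q ∪ E with z = Σ λ_x x, Σ λ_x = 1, λ_x = 0 whenever ‖z−x‖² ≠ s, λ_x ≥ 0 for x ∈ Q \ E, and λ_x ≤ 0 for x ∈ E \ Q. Then for every sphere with center z' and squared radius s' including Q and excluding E, we have s ≤ s'. -/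
open scoped RealInnerProductSpace


/-- **KKT sufficiency for the smallest enclosing/excluding sphere.**
If a sphere with center `z` and squared radius `s` includes `Q` and excludes `E`, and
there are multipliers `λ_x`, `x ∈ Q ∪ E`, writing `z` as an affine combination of the
points, vanishing off the sphere, nonnegative on `Q \ E` and nonpositive on `E \ Q`,
then every sphere including `Q` and excluding `E` has squared radius at least `s`. -/
theorem kkt_sufficiency_smallest_sphere (n : ℕ)
    [DecidableEq (EuclideanSpace ℝ (Fin n))]
    (Q E : Finset (EuclideanSpace ℝ (Fin n)))
    (z : EuclideanSpace ℝ (Fin n)) (s : ℝ)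
    (hincl : ∀ q ∈ Q, dist z q ^ 2 ≤ s)
    (hexcl : ∀ e ∈ E, s ≤ dist z e ^ 2)
    (lam : EuclideanSpace ℝ (Fin n) → ℝ)
    (hcenter : z = ∑ x ∈ Q ∪ E, lam x • x)
    (hsum : ∑ x ∈ Q ∪ E, lam x = 1)
    (hslack : ∀ x ∈ Q ∪ E, dist z x ^ 2 ≠ s → lam x = 0)
    (hQpos : ∀ x ∈ Q \ E, 0 ≤ lam x)
    (hEneg : ∀ x ∈ E \ Q, lam x ≤ 0) :
    ∀ (z' : EuclideanSpace ℝ (Fin n)) (s' : ℝ),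
      (∀ q ∈ Q, dist z' q ^ 2 ≤ s') → (∀ e ∈ E, s' ≤ dist z' e ^ 2) → s ≤ s' := by
  intro z' s' hincl' hexcl'
  have key : ∀ v : EuclideanSpace ℝ (Fin n),
      (∑ x ∈ Q ∪ E, lam x * ⟪v, x⟫) = ⟪v, z⟫ := by
    intro v
    rw [hcenter, inner_sum]
    simp only [real_inner_smul_right]
  have hd : ∀ v x : EuclideanSpace ℝ (Fin n),
      dist v x ^ 2 = ‖v‖ ^ 2 - 2 * ⟪v, x⟫ + ‖x‖ ^ 2 := by
    intro v x
    rw [dist_eq_norm, norm_sub_sq_real]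
  have expand : ∀ v : EuclideanSpace ℝ (Fin n),
      ∑ x ∈ Q ∪ E, lam x * dist v x ^ 2
        = ‖v‖ ^ 2 - 2 * ⟪v, z⟫ + ∑ x ∈ Q ∪ E, lam x * ‖x‖ ^ 2 := by
    intro v
    have step : ∀ x ∈ Q ∪ E, lam x * dist v x ^ 2
        = lam x * ‖v‖ ^ 2 - 2 * (lam x * ⟪v, x⟫) + lam x * ‖x‖ ^ 2 := by
      intro x _; rw [hd]; ring
    rw [Finset.sum_congr rfl step, Finset.sum_add_distrib, Finset.sum_sub_distrib,
      ← Finset.sum_mul, hsum, one_mul, ← Finset.mul_sum, key]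
  have h1 : ∑ x ∈ Q ∪ E, lam x * dist z x ^ 2 = s := by
    have : ∑ x ∈ Q ∪ E, lam x * dist z x ^ 2 = ∑ x ∈ Q ∪ E, lam x * s := by
      refine Finset.sum_congr rfl fun x hx => ?_
      by_cases h : dist z x ^ 2 = s
      · rw [h]
      · rw [hslack x hx h]; ring
    rw [this, ← Finset.sum_mul, hsum, one_mul]
  have h2 : ∑ x ∈ Q ∪ E, lam x * dist z' x ^ 2 ≤ s' := by
    have : ∑ x ∈ Q ∪ E, lam x * dist z' x ^ 2 ≤ ∑ x ∈ Q ∪ E, lam x * s' := by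
      refine Finset.sum_le_sum fun x hx => ?_
      rcases Finset.mem_union.mp hx with hxQ | hxE
      · by_cases hxE : x ∈ E
        · have := le_antisymm (hincl' x hxQ) (hexcl' x hxE)
          rw [this]
        · exact mul_le_mul_of_nonneg_left (hincl' x hxQ)
            (hQpos x (Finset.mem_sdiff.mpr ⟨hxQ, hxE⟩))
      · by_cases hxQ : x ∈ Q
        · have := le_antisymm (hincl' x hxQ) (hexcl' x hxE)
          rw [this]
        · exact mul_le_mul_of_nonpos_left (hexcl' x hxE)
            (hEneg x (Finset.mem_sdiff.mpr ⟨hxE, hxQ⟩))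
    calc ∑ x ∈ Q ∪ E, lam x * dist z' x ^ 2 ≤ ∑ x ∈ Q ∪ E, lam x * s' := this
      _ = s' := by rw [← Finset.sum_mul, hsum, one_mul]
  have hmid : ∑ x ∈ Q ∪ E, lam x * dist z x ^ 2 ≤ ∑ x ∈ Q ∪ E, lam x * dist z' x ^ 2 := by
    rw [expand z, expand z']
    have h0 : (0 : ℝ) ≤ ‖z' - z‖ ^ 2 := sq_nonneg _
    have hz : ⟪z, z⟫ = ‖z‖ ^ 2 := real_inner_self_eq_norm_sq z
    have hns := norm_sub_sq_real z' z
    nlinarith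
  linarith [h1 ▸ hmid, h2]
end

section
/- Uniqueness of the smallest sphere: if Q, E ⊆ ℝⁿ are finite and there exists a sphere including Q and excluding E, with Q nonempty, then among all spheres including Q and excluding E there is a unique one of minimal squared radius (both its center and squared radius are unique). -/
lemma dist_midpoint_sq' {V : Type*} [NormedAddCommGroup V] [InnerProductSpace ℝ V]
    (a b x : V) :
    dist (midpoint ℝ a b) x ^ 2 = dist a x ^ 2 / 2 + dist b x ^ 2 / 2 - dist a b ^ 2 / 4 := by
  have par := parallelogram_law_with_norm ℝ (a - x) (b - x)
  have h1 : midpoint ℝ a b - x = (2:ℝ)⁻¹ • ((a - x) + (b - x)) := by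
    rw [midpoint_eq_smul_add, invOf_eq_inv]; module
  have h2 : (a - x) - (b - x) = a - b := by abel
  simp only [dist_eq_norm]
  rw [h1, norm_smul]
  rw [h2] at par
  have : ‖(a - x) + (b - x)‖ ^ 2 = 2 * ‖a - x‖^2 + 2 * ‖b - x‖^2 - ‖a - b‖^2 := by nlinarith [par]
  rw [mul_pow, this]
  norm_num
  ring


/-- **Uniqueness of the smallest sphere.**
If `Q` is nonempty and some sphere (center `z`, squared radius `s ≥ 0`) includes `Q` and
excludes `E`, then there is a unique pair `(z, s)` consisting of the center and squared
radius of a sphere including `Q` and excluding `E` whose squared radius is minimal. -/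
theorem smallest_sphere_unique (n : ℕ)
    (Q E : Finset (EuclideanSpace ℝ (Fin n))) (hQ : Q.Nonempty)
    (hfeas : ∃ (z : EuclideanSpace ℝ (Fin n)) (s : ℝ), 0 ≤ s ∧
      (∀ q ∈ Q, dist z q ^ 2 ≤ s) ∧ ∀ e ∈ E, s ≤ dist z e ^ 2) :
    ∃! zs : EuclideanSpace ℝ (Fin n) × ℝ,
      (0 ≤ zs.2 ∧ (∀ q ∈ Q, dist zs.1 q ^ 2 ≤ zs.2) ∧ (∀ e ∈ E, zs.2 ≤ dist zs.1 e ^ 2)) ∧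
      ∀ (z' : EuclideanSpace ℝ (Fin n)) (s' : ℝ), 0 ≤ s' →
        (∀ q ∈ Q, dist z' q ^ 2 ≤ s') → (∀ e ∈ E, s' ≤ dist z' e ^ 2) → zs.2 ≤ s' := by
  classical
  obtain ⟨z₀, s₀, hs₀, hQ₀, hE₀⟩ := hfeas
  obtain ⟨q₀, hq₀⟩ := hQ
  set K : Set ((EuclideanSpace ℝ (Fin n)) × ℝ) :=
    {zs | 0 ≤ zs.2 ∧ (∀ q ∈ Q, dist zs.1 q ^ 2 ≤ zs.2) ∧ (∀ e ∈ E, zs.2 ≤ dist zs.1 e ^ 2)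
      ∧ zs.2 ≤ s₀} with hKdef
  have hKne : K.Nonempty := ⟨(z₀, s₀), hs₀, hQ₀, hE₀, le_refl _⟩
  have hKeq : K = {zs : (EuclideanSpace ℝ (Fin n)) × ℝ | 0 ≤ zs.2} ∩
      ((⋂ q ∈ Q, {zs : (EuclideanSpace ℝ (Fin n)) × ℝ | dist zs.1 q ^ 2 ≤ zs.2}) ∩
       ((⋂ e ∈ E, {zs : (EuclideanSpace ℝ (Fin n)) × ℝ | zs.2 ≤ dist zs.1 e ^ 2}) ∩ {zs : (EuclideanSpace ℝ (Fin n)) × ℝ | zs.2 ≤ s₀})) := by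
    ext zs; simp only [hKdef, Set.mem_inter_iff, Set.mem_iInter, Set.mem_setOf_eq]; try tauto
  have hKclosed : IsClosed K := by
    rw [hKeq]
    refine (isClosed_le continuous_const continuous_snd).inter
      ((isClosed_biInter fun q _ => isClosed_le (by fun_prop) continuous_snd).inter
      ((isClosed_biInter fun e _ => isClosed_le continuous_snd (by fun_prop)).inter
      (isClosed_le continuous_snd continuous_const)))
  have hKbdd : Bornology.IsBounded K := by
    have hsub : K ⊆ (Metric.closedBall q₀ (Real.sqrt s₀)) ×ˢ (Set.Icc (0:ℝ) s₀) := by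
      rintro ⟨z, s⟩ ⟨h1, h2, h3, h4⟩
      refine ⟨?_, h1, h4⟩
      have hq := h2 q₀ hq₀
      simp only [Metric.mem_closedBall]
      nlinarith [Real.sq_sqrt hs₀, Real.sqrt_nonneg s₀, dist_nonneg (x := z) (y := q₀)]
    exact (Metric.isBounded_closedBall.prod (Metric.isBounded_Icc 0 s₀)).subset hsub
  have hKcompact : IsCompact K := Metric.isCompact_of_isClosed_isBounded hKclosed hKbdd
  obtain ⟨zs, hzsK, hmin⟩ := hKcompact.exists_isMinOn hKne continuous_snd.continuousOn
  obtain ⟨hzs1, hzs2, hzs3, hzs4⟩ := hzsK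
  have hglobal : ∀ (z' : EuclideanSpace ℝ (Fin n)) (s' : ℝ), 0 ≤ s' →
      (∀ q ∈ Q, dist z' q ^ 2 ≤ s') → (∀ e ∈ E, s' ≤ dist z' e ^ 2) → zs.2 ≤ s' := by
    intro z' s' h1 h2 h3
    by_cases h : s' ≤ s₀
    · exact isMinOn_iff.mp hmin (z', s') ⟨h1, h2, h3, h⟩
    · have hle : zs.2 ≤ s₀ := hzs4
      linarith
  refine ⟨zs, ⟨⟨hzs1, hzs2, hzs3⟩, hglobal⟩, ?_⟩
  rintro ⟨z', s'⟩ ⟨⟨h1, h2, h3⟩, hmin'⟩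
  have hs_eq : s' = zs.2 :=
    le_antisymm (hmin' zs.1 zs.2 hzs1 hzs2 hzs3) (hglobal z' s' h1 h2 h3)
  have hz_eq : z' = zs.1 := by
    by_contra hne
    set m := midpoint ℝ z' zs.1 with hm
    set d := dist z' zs.1 ^ 2 with hd
    have hdpos : 0 < d := by
      have h0 : 0 < dist z' zs.1 := dist_pos.mpr hne
      exact pow_pos h0 2
    have hmQ : ∀ q ∈ Q, dist m q ^ 2 ≤ zs.2 - d / 4 := by
      intro q hq
      rw [hm, dist_midpoint_sq']
      have := h2 q hq
      have := hzs2 q hq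
      rw [hs_eq] at *
      linarith
    have hmE : ∀ e ∈ E, zs.2 - d / 4 ≤ dist m e ^ 2 := by
      intro e he
      rw [hm, dist_midpoint_sq']
      have := h3 e he
      have := hzs3 e he
      rw [hs_eq] at *
      linarith
    have hnn : 0 ≤ zs.2 - d / 4 := le_trans (sq_nonneg _) (hmQ q₀ hq₀)
    have := hglobal m (zs.2 - d / 4) hnn hmQ hmE
    linarith
  exact Prod.ext hz_eq hs_eq
end

section
/- Same Sphere Lemma (inclusion side): Let Q, E ⊆ ℝⁿ be finite and let S (center z, squared radius s) be the smallest sphere including Q and excluding E. Suppose x ∈ ℝⁿ satisfies ‖z−x‖² ≤ s and, in the KKT representation z = Σ_{p ∈ On(S)} ρ_p p with Σ ρ_p = 1, either x ∉ On(S) or ρ_x ≤ 0 (i.e., x is not in the front face Front(S)). Then S is also the smallest sphere including Q ∪ {x} and excluding E, and the smallest sphere including Q \ {x} and excluding E. -/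
/-! For an affine representation `z = ∑ ρ_p p` with `∑ ρ_p = 1`, the parallel-axis identity
`∑ ρ_p ‖w - p‖² = ‖w - z‖² + ∑ ρ_p ‖z - p‖²` holds for every `w`. If all points carrying weight lie
on the sphere `S` of squared radius `s` about `z`, then for any competitor sphere `(w, s')`
containing the front points (`ρ_p > 0`) and excluding the back points (`ρ_p < 0`), each term
`ρ_p (‖w - p‖² - s')` is nonpositive, whence `s + ‖w - z‖² ≤ s'`. Removing from `Q` a point `x`
with `ρ_x ≤ 0` keeps the front inside `Q`, so `S` stays optimal; adding a point inside `S` only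
shrinks the set of competitors. -/

/-- A sphere with center `z` and squared radius `s ≥ 0` includes `Q`, excludes `E`, and has
minimal squared radius among all such spheres. -/
def IsSmallestSphere {n : ℕ} (Q E : Finset (EuclideanSpace ℝ (Fin n)))
    (z : EuclideanSpace ℝ (Fin n)) (s : ℝ) : Prop :=
  0 ≤ s ∧ (∀ q ∈ Q, dist z q ^ 2 ≤ s) ∧ (∀ e ∈ E, s ≤ dist z e ^ 2) ∧
    ∀ (z' : EuclideanSpace ℝ (Fin n)) (s' : ℝ), 0 ≤ s' →
      (∀ q ∈ Q, dist z' q ^ 2 ≤ s') → (∀ e ∈ E, s' ≤ dist z' e ^ 2) → s ≤ s'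

open Finset

section ParallelAxis

variable {V : Type*} [NormedAddCommGroup V] [InnerProductSpace ℝ V]

theorem sum_smul_sub_eq_zero_of_affine (T : Finset V) (ρ : V → ℝ) (z : V)
    (hrep : z = ∑ p ∈ T, ρ p • p) (hsum : ∑ p ∈ T, ρ p = 1) :
    ∑ p ∈ T, ρ p • (z - p) = 0 := by
  simp only [smul_sub, sum_sub_distrib, ← sum_smul, hsum, one_smul, ← hrep, sub_self]

theorem sum_mul_dist_sq_eq_dist_sq_add (T : Finset V) (ρ : V → ℝ) (z w : V)
    (hrep : z = ∑ p ∈ T, ρ p • p) (hsum : ∑ p ∈ T, ρ p = 1) :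
    ∑ p ∈ T, ρ p * dist w p ^ 2 = dist w z ^ 2 + ∑ p ∈ T, ρ p * dist z p ^ 2 := by
  have hcross : ∑ p ∈ T, ρ p * inner ℝ (w - z) (z - p) = 0 := by
    simp_rw [← real_inner_smul_right, ← inner_sum,
      sum_smul_sub_eq_zero_of_affine T ρ z hrep hsum, inner_zero_right]
  have hsplit : ∀ p ∈ T, ρ p * dist w p ^ 2 =
      ρ p * dist w z ^ 2 + 2 * (ρ p * inner ℝ (w - z) (z - p)) + ρ p * dist z p ^ 2 := by
    intro p _
    rw [dist_eq_norm, dist_eq_norm, dist_eq_norm, ← sub_add_sub_cancel w z p, norm_add_sq_real]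
    ring
  rw [sum_congr rfl hsplit, sum_add_distrib, sum_add_distrib, ← sum_mul, hsum, one_mul, ← mul_sum,
    hcross, mul_zero, add_zero]

theorem add_dist_sq_le_of_weighted_sign (T : Finset V) (ρ : V → ℝ) (z w : V) (s s' : ℝ)
    (hon : ∀ p ∈ T, ρ p ≠ 0 → dist z p ^ 2 = s)
    (hrep : z = ∑ p ∈ T, ρ p • p) (hsum : ∑ p ∈ T, ρ p = 1)
    (hsign : ∀ p ∈ T, ρ p * (dist w p ^ 2 - s') ≤ 0) :
    s + dist z w ^ 2 ≤ s' := by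
  have hon_sum : ∑ p ∈ T, ρ p * dist z p ^ 2 = s := by
    rw [← one_mul s, ← hsum, sum_mul]
    refine sum_congr rfl fun p hp => ?_
    rcases eq_or_ne (ρ p) 0 with h | h
    · simp [h]
    · rw [hon p hp h]
  have htotal : ∑ p ∈ T, ρ p * (dist w p ^ 2 - s') = dist z w ^ 2 + s - s' := by
    simp_rw [mul_sub, sum_sub_distrib, ← sum_mul, hsum, one_mul,
      sum_mul_dist_sq_eq_dist_sq_add T ρ z w hrep hsum, hon_sum, dist_comm w z]
  linarith [sum_nonpos hsign]

end ParallelAxis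

theorem IsSmallestSphere.insert {n : ℕ} [DecidableEq (EuclideanSpace ℝ (Fin n))]
    {Q E : Finset (EuclideanSpace ℝ (Fin n))} {z : EuclideanSpace ℝ (Fin n)} {s : ℝ}
    (hS : IsSmallestSphere Q E z s) {x : EuclideanSpace ℝ (Fin n)} (hx : dist z x ^ 2 ≤ s) :
    IsSmallestSphere (insert x Q) E z s := by
  obtain ⟨hs, hQ, hE, hmin⟩ := hS
  refine ⟨hs, forall_mem_insert _ _ _ |>.mpr ⟨hx, hQ⟩, hE, fun z' s' hs' hQ' hE' => ?_⟩
  exact hmin z' s' hs' (fun q hq => hQ' q (mem_insert_of_mem hq)) hE'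

theorem IsSmallestSphere.of_kkt {n : ℕ} {Q E T : Finset (EuclideanSpace ℝ (Fin n))}
    {z : EuclideanSpace ℝ (Fin n)} {s : ℝ} (hs : 0 ≤ s)
    (hQ : ∀ q ∈ Q, dist z q ^ 2 ≤ s) (hE : ∀ e ∈ E, s ≤ dist z e ^ 2)
    (ρ : EuclideanSpace ℝ (Fin n) → ℝ) (hon : ∀ p ∈ T, ρ p ≠ 0 → dist z p ^ 2 = s)
    (hrep : z = ∑ p ∈ T, ρ p • p) (hsum : ∑ p ∈ T, ρ p = 1)
    (hfront : ∀ p ∈ T, 0 < ρ p → p ∈ Q) (hback : ∀ p ∈ T, ρ p < 0 → p ∈ E) :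
    IsSmallestSphere Q E z s := by
  refine ⟨hs, hQ, hE, fun z' s' _ hQ' hE' => ?_⟩
  have hsign : ∀ p ∈ T, ρ p * (dist z' p ^ 2 - s') ≤ 0 := by
    intro p hp
    rcases lt_trichotomy (ρ p) 0 with hneg | hzero | hpos
    · exact mul_nonpos_of_nonpos_of_nonneg hneg.le (sub_nonneg.mpr (hE' p (hback p hp hneg)))
    · simp [hzero]
    · exact mul_nonpos_of_nonneg_of_nonpos hpos.le (sub_nonpos.mpr (hQ' p (hfront p hp hpos)))
  linarith [add_dist_sq_le_of_weighted_sign T ρ z z' s s' hon hrep hsum hsign,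
    sq_nonneg (dist z z')]

/-- **Same Sphere Lemma (inclusion side).**
Let `S` (center `z`, squared radius `s`) be the smallest sphere including `Q` and
excluding `E`, with KKT representation `z = ∑_{p ∈ On(S)} ρ_p p`, `∑ ρ_p = 1`, where the
coefficients vanish off `On(S)`, are nonnegative on `Q \ E` and nonpositive on `E \ Q`.
If `x` lies on or inside `S` and is not in the front face (`ρ_x ≤ 0`, which in particular
holds when `x ∉ On(S)`), then `S` is also the smallest sphere including `Q ∪ {x}` and
excluding `E`, and the smallest sphere including `Q \ {x}` and excluding `E`. -/
theorem same_sphere_lemma_inclusion (n : ℕ)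
    [DecidableEq (EuclideanSpace ℝ (Fin n))]
    (Q E : Finset (EuclideanSpace ℝ (Fin n)))
    (z : EuclideanSpace ℝ (Fin n)) (s : ℝ)
    (hS : IsSmallestSphere Q E z s)
    (ρ : EuclideanSpace ℝ (Fin n) → ℝ)
    (hsupp : ∀ p, ρ p ≠ 0 → p ∈ Q ∪ E ∧ dist z p ^ 2 = s)
    (hrep : z = ∑ p ∈ Q ∪ E, ρ p • p)
    (hsum : ∑ p ∈ Q ∪ E, ρ p = 1)
    (hQpos : ∀ p ∈ Q \ E, 0 ≤ ρ p)
    (hEneg : ∀ p ∈ E \ Q, ρ p ≤ 0)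
    (x : EuclideanSpace ℝ (Fin n))
    (hx_incl : dist z x ^ 2 ≤ s)
    (hx_notfront : ρ x ≤ 0) :
    IsSmallestSphere (insert x Q) E z s ∧ IsSmallestSphere (Q.erase x) E z s := by
  refine ⟨hS.insert hx_incl, ?_⟩
  obtain ⟨hs, hQ, hE, -⟩ := hS
  refine .of_kkt hs (fun q hq => hQ q (mem_of_mem_erase hq)) hE ρ
    (fun p _ h => (hsupp p h).2) hrep hsum (fun p hp hpos => ?_) (fun p hp hneg => ?_)
  · have hpQ : p ∈ Q := by
      by_contra hpQ
      have hpE : p ∈ E := (mem_union.mp hp).resolve_left hpQ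
      linarith [hEneg p (mem_sdiff.mpr ⟨hpE, hpQ⟩)]
    exact mem_erase.mpr ⟨fun hpx => by subst hpx; linarith, hpQ⟩
  · by_contra hpE
    have hpQ : p ∈ Q := (mem_union.mp hp).resolve_right hpE
    linarith [hQpos p (mem_sdiff.mpr ⟨hpQ, hpE⟩)]
end

section
/- Vertex Gradient Lemma: Let K be a finite abstract simplicial complex on a vertex set and let x be a vertex. Let V be a partition of K into singletons and pairs such that every pair has the form {Q \ {x}, Q ∪ {x}} for some simplex Q with Q ∪ {x} ∈ K and Q \ {x} ∈ K. Then V is a discrete gradient: there exists a function f : K → ℝ with f(P) ≤ f(Q) whenever P ⊆ Q, with equality for P ≠ Q if and only if {P, Q} is a pair of V. -/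
/-- **Vertex Gradient Lemma.**
Let `K` be a finite abstract simplicial complex and `x` a vertex.  If `V` is a
discrete vector field on `K` (a set of disjoint facet–cofacet pairs) all of whose pairs
have the form `(Q \ {x}, Q ∪ {x})`, then `V` is a discrete gradient: there is a function
`f : K → ℝ` with `f P ≤ f Q` whenever `P ⊆ Q`, with equality (for `P ≠ Q`) exactly on
the pairs of `V`. -/
theorem vertex_gradient_lemma {α : Type*} [DecidableEq α]
    (K : Finset (Finset α))
    (hcomplex : ∀ s ∈ K, s.Nonempty ∧ ∀ t ⊆ s, t.Nonempty → t ∈ K)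
    (x : α) (V : Set (Finset α × Finset α))
    (hform : ∀ pq ∈ V, pq.1 ∈ K ∧ pq.2 ∈ K ∧ x ∉ pq.1 ∧ pq.2 = insert x pq.1)
    (hdisj : ∀ pq ∈ V, ∀ pq' ∈ V, pq ≠ pq' →
      pq.1 ≠ pq'.1 ∧ pq.1 ≠ pq'.2 ∧ pq.2 ≠ pq'.1 ∧ pq.2 ≠ pq'.2) :
    ∃ f : Finset α → ℝ, ∀ P ∈ K, ∀ Q ∈ K, P ⊆ Q →
      f P ≤ f Q ∧ (P ≠ Q → (f P = f Q ↔ (P, Q) ∈ V)) := by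
  classical
  set f : Finset α → ℝ := fun S =>
    if (S, insert x S) ∈ V then (S.card : ℝ) + 1/2
    else if (S.erase x, S) ∈ V then (S.card : ℝ) - 1/2 else (S.card : ℝ) with hf
  have hub : ∀ S, f S ≤ (S.card : ℝ) + 1/2 := by
    intro S; simp only [hf]; split_ifs <;> linarith
  have hlb : ∀ S, (S.card : ℝ) - 1/2 ≤ f S := by
    intro S; simp only [hf]; split_ifs <;> linarith
  refine ⟨f, ?_⟩
  intro P hP Q hQ hPQ
  by_cases hne : P = Q
  · subst hne
    exact ⟨le_refl _, fun h => absurd rfl h⟩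
  have hlt : P.card < Q.card := Finset.card_lt_card (hPQ.ssubset_of_ne hne)
  have hcast : (P.card : ℝ) + 1 ≤ (Q.card : ℝ) := by exact_mod_cast hlt
  have hle : f P ≤ f Q := by
    have := hub P; have := hlb Q; linarith
  refine ⟨hle, fun _ => ?_⟩
  constructor
  · intro heq
    -- equality forces card Q = card P + 1 and the extreme branch values
    have hfP : f P = (P.card : ℝ) + 1/2 := by
      have := hub P; have := hlb Q; linarith
    have hfQ : f Q = (Q.card : ℝ) - 1/2 := by
      have := hub P; have := hlb Q; linarith
    have hcard : (Q.card : ℝ) = (P.card : ℝ) + 1 := by linarith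
    -- P is the lower member of a pair
    have hPlow : (P, insert x P) ∈ V := by
      by_contra h1
      simp only [hf, if_neg h1] at hfP
      split_ifs at hfP <;> linarith
    -- Q is the upper member of a pair
    have hQup : (Q.erase x, Q) ∈ V := by
      by_contra h2
      by_cases h1 : (Q, insert x Q) ∈ V
      · simp only [hf, if_pos h1] at hfQ; linarith
      · simp only [hf, if_neg h1, if_neg h2] at hfQ; linarith
    have hxP : x ∉ P := (hform _ hPlow).2.2.1
    have hxQ : x ∈ Q := by
      have h := (hform _ hQup).2.2.2
      simp only at h
      rw [h]; exact Finset.mem_insert_self x _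
    have hsub : P ⊆ Q.erase x := fun a ha =>
      Finset.mem_erase.2 ⟨fun h => hxP (h ▸ ha), hPQ ha⟩
    have hcards : Q.card ≤ P.card + 1 := by exact_mod_cast hcard.le
    have hce : (Q.erase x).card ≤ P.card := by
      rw [Finset.card_erase_of_mem hxQ]; omega
    have hPeq : P = Q.erase x := Finset.eq_of_subset_of_card_le hsub hce
    rw [hPeq]; exact hQup
  · intro hmem
    obtain ⟨-, -, hxP, hQeq⟩ := hform _ hmem
    simp only at hxP hQeq
    have hPlow : (P, insert x P) ∈ V := by rwa [← hQeq]
    have hxQ : x ∈ Q := hQeq ▸ Finset.mem_insert_self x P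
    have hQnotlow : (Q, insert x Q) ∉ V := fun h => (hform _ h).2.2.1 hxQ
    have hQup : (Q.erase x, Q) ∈ V := by
      have : Q.erase x = P := by rw [hQeq, Finset.erase_insert hxP]
      rwa [this]
    have hcard : Q.card = P.card + 1 := by
      rw [hQeq, Finset.card_insert_of_notMem hxP]
    simp only [hf, if_pos hPlow, if_neg hQnotlow, if_pos hQup, hcard]
    push_cast; ring
end

section
/- Sum Refinement Lemma: Let f : K → ℝ and g : L → ℝ be generalized discrete Morse functions on simplicial complexes K and L with generalized gradients V_f and V_g (partitions into intervals [P,R] = {Q : P ⊆ Q ⊆ R}). Then f + g : K ∩ L → ℝ is a generalized discrete Morse function whose generalized gradient is {I ∩ J : I ∈ V_f, J ∈ V_g, I ∩ J ≠ ∅}. In particular, the intersection of two intervals of simplices is an interval, and (f+g)(P) = (f+g)(Q) for P ⊆ Q in K ∩ L iff P and Q lie in a common set I ∩ J. -/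
/-- `f` is a generalized discrete Morse function on the simplicial complex `K` with
generalized discrete gradient `V`: `V` is a partition of `K` into nonempty intervals
`[P, R] = {Q : P ⊆ Q ⊆ R}` of the face poset, `f` is monotone with respect to the face
relation, and two comparable simplices have equal value iff they lie in a common
interval of `V`. -/
def IsGenDiscreteMorse {α : Type*} (K : Set (Finset α)) (f : Finset α → ℝ)
    (V : Set (Set (Finset α))) : Prop :=
  (∀ I ∈ V, I ⊆ K ∧ ∃ P R : Finset α, P ⊆ R ∧ I = {Q : Finset α | P ⊆ Q ∧ Q ⊆ R}) ∧
    (∀ Q ∈ K, ∃! I, I ∈ V ∧ Q ∈ I) ∧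
    ∀ P ∈ K, ∀ Q ∈ K, P ⊆ Q →
      f P ≤ f Q ∧ (f P = f Q ↔ ∃ I ∈ V, P ∈ I ∧ Q ∈ I)

/-- **Sum Refinement Lemma.**
If `f : K → ℝ` and `g : L → ℝ` are generalized discrete Morse functions with generalized
gradients `V_f` and `V_g`, then `f + g : K ∩ L → ℝ` is a generalized discrete Morse
function whose generalized gradient consists of the nonempty intersections `I ∩ J` with
`I ∈ Vf`, `J ∈ Vg`.  In particular each such `I ∩ J` is again an interval, and
`(f+g)(P) = (f+g)(Q)` for faces `P ⊆ Q` in `K ∩ L` iff `P` and `Q` lie in a common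
`I ∩ J`. -/
theorem sum_refinement_lemma {α : Type*}
    (K L : Set (Finset α)) (f g : Finset α → ℝ)
    (Vf Vg : Set (Set (Finset α)))
    (hf : IsGenDiscreteMorse K f Vf) (hg : IsGenDiscreteMorse L g Vg) :
    IsGenDiscreteMorse (K ∩ L) (fun Q => f Q + g Q)
      {W : Set (Finset α) | ∃ I ∈ Vf, ∃ J ∈ Vg, (I ∩ J).Nonempty ∧ W = I ∩ J} := by
  classical
  obtain ⟨hf1, hf2, hf3⟩ := hf
  obtain ⟨hg1, hg2, hg3⟩ := hg
  refine ⟨?_, ?_, ?_⟩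
  · rintro W ⟨I, hI, J, hJ, ⟨S, hSI, hSJ⟩, rfl⟩
    obtain ⟨hIK, P, R, hPR, hIeq⟩ := hf1 I hI
    obtain ⟨hJL, P', R', hPR', hJeq⟩ := hg1 J hJ
    refine ⟨fun Q hQ => ⟨hIK hQ.1, hJL hQ.2⟩, P ∪ P', R ∩ R', ?_, ?_⟩
    · rw [hIeq] at hSI; rw [hJeq] at hSJ
      exact Finset.union_subset (hSI.1.trans (Finset.subset_inter hSI.2 hSJ.2))
        (hSJ.1.trans (Finset.subset_inter hSI.2 hSJ.2))
    · ext Q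
      simp only [hIeq, hJeq, Set.mem_inter_iff, Set.mem_setOf_eq,
        Finset.union_subset_iff, Finset.subset_inter_iff]
      tauto
  · rintro Q ⟨hQK, hQL⟩
    obtain ⟨I, ⟨hI, hQI⟩, hIuniq⟩ := hf2 Q hQK
    obtain ⟨J, ⟨hJ, hQJ⟩, hJuniq⟩ := hg2 Q hQL
    refine ⟨I ∩ J, ⟨⟨I, hI, J, hJ, ⟨Q, hQI, hQJ⟩, rfl⟩, hQI, hQJ⟩, ?_⟩
    rintro W ⟨⟨I', hI', J', hJ', _, rfl⟩, hQI', hQJ'⟩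
    rw [hIuniq I' ⟨hI', hQI'⟩, hJuniq J' ⟨hJ', hQJ'⟩]
  · rintro P ⟨hPK, hPL⟩ Q ⟨hQK, hQL⟩ hPQ
    obtain ⟨hfle, hfeq⟩ := hf3 P hPK Q hQK hPQ
    obtain ⟨hgle, hgeq⟩ := hg3 P hPL Q hQL hPQ
    refine ⟨add_le_add hfle hgle, ?_⟩
    constructor
    · intro h
      simp only at h
      have hfE : f P = f Q := le_antisymm hfle (by linarith)
      have hgE : g P = g Q := by linarith
      obtain ⟨I, hI, hPI, hQI⟩ := hfeq.mp hfE
      obtain ⟨J, hJ, hPJ, hQJ⟩ := hgeq.mp hgE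
      exact ⟨I ∩ J, ⟨I, hI, J, hJ, ⟨P, hPI, hPJ⟩, rfl⟩, ⟨hPI, hPJ⟩, ⟨hQI, hQJ⟩⟩
    · rintro ⟨W, ⟨I, hI, J, hJ, _, rfl⟩, ⟨hPI, hPJ⟩, ⟨hQI, hQJ⟩⟩
      have := hfeq.mpr ⟨I, hI, hPI, hQI⟩
      have := hgeq.mpr ⟨J, hJ, hPJ, hQJ⟩
      simp only
      linarith
end

section
/- Gradient Composition Lemma: Let K₀ ⊆ K₁ be finite simplicial complexes with discrete gradients V₀ on K₀ and V₁ on K₁, whose sets of pairs are P₀ and P₁ respectively. If every pair in P₁ consists of two simplices both lying outside K₀, then there is a discrete gradient on K₁ whose set of pairs is exactly P₀ ∪ P₁ (i.e., the combined discrete vector field is acyclic). -/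
/-- `Pairs` is a discrete gradient on the simplicial complex `K`: a set of pairwise
disjoint facet–cofacet pairs of simplices of `K` admitting a compatible discrete Morse
function (monotone along the face relation, with equality on comparable distinct
simplices exactly on the pairs). -/
def IsDiscreteGradient {α : Type*} (K : Set (Finset α))
    (Pairs : Set (Finset α × Finset α)) : Prop :=
  (∀ pq ∈ Pairs, pq.1 ∈ K ∧ pq.2 ∈ K ∧ pq.1 ⊂ pq.2 ∧ pq.2.card = pq.1.card + 1) ∧
    (∀ pq ∈ Pairs, ∀ pq' ∈ Pairs, pq ≠ pq' →
      pq.1 ≠ pq'.1 ∧ pq.1 ≠ pq'.2 ∧ pq.2 ≠ pq'.1 ∧ pq.2 ≠ pq'.2) ∧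
    ∃ f : Finset α → ℝ, ∀ A ∈ K, ∀ B ∈ K, A ⊆ B →
      f A ≤ f B ∧ (A ≠ B → (f A = f B ↔ (A, B) ∈ Pairs))

/-- **Gradient Composition Lemma.**
Let `K₀ ⊆ K₁` be simplicial complexes with discrete gradients having pair sets `P₀`
and `P₁`.  If every pair of `P₁` is disjoint from `K₀`, then `P₀ ∪ P₁` is the set of
pairs of a discrete gradient on `K₁`. -/
theorem gradient_composition_lemma {α : Type*}
    (K₀ K₁ : Set (Finset α)) (hK : K₀ ⊆ K₁)
    (hcx₀ : ∀ s ∈ K₀, s.Nonempty ∧ ∀ t : Finset α, t ⊆ s → t.Nonempty → t ∈ K₀)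
    (hcx₁ : ∀ s ∈ K₁, s.Nonempty ∧ ∀ t : Finset α, t ⊆ s → t.Nonempty → t ∈ K₁)
    (P₀ P₁ : Set (Finset α × Finset α))
    (h₀ : IsDiscreteGradient K₀ P₀) (h₁ : IsDiscreteGradient K₁ P₁)
    (hout : ∀ pq ∈ P₁, pq.1 ∉ K₀ ∧ pq.2 ∉ K₀) :
    IsDiscreteGradient K₁ (P₀ ∪ P₁) := by
  classical
  obtain ⟨hp₀, hd₀, f₀, hf₀⟩ := h₀
  obtain ⟨hp₁, hd₁, f₁, hf₁⟩ := h₁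
  have hpi : Real.pi / 2 < 2 := by
    have := Real.pi_lt_d2; linarith
  refine ⟨?_, ?_, ?_⟩
  · rintro pq (hpq | hpq)
    · obtain ⟨h1, h2, h3, h4⟩ := hp₀ pq hpq
      exact ⟨hK h1, hK h2, h3, h4⟩
    · exact hp₁ pq hpq
  · rintro pq (hpq | hpq) pq' (hpq' | hpq') hne
    · exact hd₀ pq hpq pq' hpq' hne
    · obtain ⟨h1, h2, _, _⟩ := hp₀ pq hpq
      obtain ⟨h1', h2'⟩ := hout pq' hpq'
      exact ⟨fun h => h1' (h ▸ h1), fun h => h2' (h ▸ h1),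
        fun h => h1' (h ▸ h2), fun h => h2' (h ▸ h2)⟩
    · obtain ⟨h1, h2, _, _⟩ := hp₀ pq' hpq'
      obtain ⟨h1', h2'⟩ := hout pq hpq
      exact ⟨fun h => h1' (h.symm ▸ h1), fun h => h1' (h.symm ▸ h2),
        fun h => h2' (h.symm ▸ h1), fun h => h2' (h.symm ▸ h2)⟩
    · exact hd₁ pq hpq pq' hpq' hne
  · refine ⟨fun A => if A ∈ K₀ then Real.arctan (f₀ A) else Real.arctan (f₁ A) + 4,
      fun A hA B hB hAB => ?_⟩
    by_cases hA0 : A ∈ K₀ <;> by_cases hB0 : B ∈ K₀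
    · -- both in K₀
      simp only [if_pos hA0, if_pos hB0]
      obtain ⟨hle, heq⟩ := hf₀ A hA0 B hB0 hAB
      refine ⟨Real.arctan_strictMono.monotone hle, fun hne => ?_⟩
      rw [Real.arctan_injective.eq_iff, heq hne]
      constructor
      · exact Or.inl
      · rintro (h | h)
        · exact h
        · exact absurd hA0 (hout _ h).1
    · -- A ∈ K₀, B ∉ K₀ : strict jump
      simp only [if_pos hA0, if_neg hB0]
      have h1 : Real.arctan (f₀ A) < 2 := lt_trans (Real.arctan_lt_pi_div_two _) hpi
      have h2 : (2 : ℝ) < Real.arctan (f₁ B) + 4 := by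
        have := Real.neg_pi_div_two_lt_arctan (f₁ B); linarith
      have hlt := lt_trans h1 h2
      refine ⟨le_of_lt hlt, fun hne => ?_⟩
      constructor
      · intro h; exact absurd h (ne_of_lt hlt)
      · rintro (h | h)
        · exact absurd ((hp₀ _ h).2.1) hB0
        · exact absurd hA0 (hout _ h).1
    · -- A ∉ K₀, B ∈ K₀ : impossible
      exact absurd ((hcx₀ B hB0).2 A hAB (hcx₁ A hA).1) hA0
    · -- both outside K₀
      simp only [if_neg hA0, if_neg hB0]
      obtain ⟨hle, heq⟩ := hf₁ A hA B hB hAB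
      refine ⟨by linarith [Real.arctan_strictMono.monotone hle], fun hne => ?_⟩
      rw [add_left_inj, Real.arctan_injective.eq_iff, heq hne]
      constructor
      · exact Or.inr
      · rintro (h | h)
        · exact absurd ((hp₀ _ h).1) hA0
        · exact h
end

section
/- Collapsing Theorem: Let K be a finite simplicial complex with a discrete gradient V and K' ⊆ K a subcomplex. If K \ K' is a union of pairs of V, then K collapses simplicially onto K' (there is a finite sequence of elementary collapses, each removing a free facet–cofacet pair, transforming K into K'). -/
/-- An elementary collapse removes a free facet–cofacet pair `(P, Q)`: `P ⊂ Q`,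
`Q` is the only simplex of the complex properly containing `P`. -/
def ElementaryCollapse {α : Type*} [DecidableEq α] (K K' : Finset (Finset α)) : Prop :=
  ∃ P Q : Finset α, P ∈ K ∧ Q ∈ K ∧ P ⊂ Q ∧ Q.card = P.card + 1 ∧
    (∀ R ∈ K, P ⊂ R → R = Q) ∧ K' = (K.erase P).erase Q

/-- `K` collapses simplicially onto `K'` by a finite sequence of elementary collapses. -/
def Collapses {α : Type*} [DecidableEq α] (K K' : Finset (Finset α)) : Prop :=
  Relation.ReflTransGen (fun L L' => ElementaryCollapse L L') K K'

private theorem collapse_aux {α : Type*} [DecidableEq α] (n : ℕ) :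
    ∀ (K K' : Finset (Finset α)) (V : Set (Finset α × Finset α)),
    K.card ≤ n →
    (∀ s ∈ K, s.Nonempty ∧ ∀ t : Finset α, t ⊆ s → t.Nonempty → t ∈ K) →
    K' ⊆ K →
    (∀ s ∈ K', ∀ t : Finset α, t ⊆ s → t.Nonempty → t ∈ K') →
    IsDiscreteGradient {s : Finset α | s ∈ K} V →
    (∀ Q ∈ K, Q ∉ K' → ∃ pq ∈ V, (Q = pq.1 ∨ Q = pq.2) ∧ pq.1 ∉ K' ∧ pq.2 ∉ K') →
    Collapses K K' := by
  induction n with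
  | zero =>
    intro K K' V hn _ hsub _ _ _
    have hK : K = ∅ := Finset.card_eq_zero.mp (Nat.le_zero.mp hn)
    have hK' : K' = ∅ := Finset.subset_empty.mp (hK ▸ hsub)
    rw [hK, hK']
    exact Relation.ReflTransGen.refl
  | succ n ih =>
    intro K K' V hn hcxK hsub hcxK' hgrad hdiff
    obtain ⟨hV1, hV2, f, hf⟩ := hgrad
    by_cases hKK' : K ⊆ K'
    · rw [le_antisymm hKK' hsub]
      exact Relation.ReflTransGen.refl
    -- pick a maximizer of f on K \ K'
    obtain ⟨x, hx⟩ := Finset.not_subset.mp hKK'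
    have hDne : (K \ K').Nonempty := ⟨x, Finset.mem_sdiff.mpr hx⟩
    obtain ⟨m, hm, hmax⟩ := Finset.exists_max_image (K \ K') f hDne
    have hmK : m ∈ K := (Finset.mem_sdiff.mp hm).1
    have hmK' : m ∉ K' := (Finset.mem_sdiff.mp hm).2
    obtain ⟨pq, hpqV, hmor, hp1, hp2⟩ := hdiff m hmK hmK'
    obtain ⟨hPK, hQK, hPQ, hcard⟩ := hV1 pq hpqV
    set P := pq.1 with hP
    set Q := pq.2 with hQ
    have hPK : P ∈ K := hPK
    have hQK : Q ∈ K := hQK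
    have hfPQ : f P = f Q := ((hf P hPK Q hQK hPQ.subset).2 hPQ.ne).mpr (by
      have : ((P, Q) : Finset α × Finset α) = pq := rfl
      rw [this]; exact hpqV)
    have hfQmax : ∀ R ∈ K, R ∉ K' → f R ≤ f Q := by
      intro R hRK hRK'
      have := hmax R (Finset.mem_sdiff.mpr ⟨hRK, hRK'⟩)
      rcases hmor with h | h
      · rw [h] at this; linarith [hfPQ]
      · rw [h] at this; exact this
    -- freeness of P
    have hfree : ∀ R ∈ K, P ⊂ R → R = Q := by
      intro R hRK hPR
      by_contra hRQ
      have hRK' : R ∉ K' := fun h =>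
        hp1 (hcxK' R h P hPR.subset (hcxK P hPK).1)
      have hPRnV : ((P, R) : Finset α × Finset α) ∉ V := by
        intro h
        have hne : ((P, R) : Finset α × Finset α) ≠ pq := by
          intro e
          exact hRQ (congrArg Prod.snd e)
        exact (hV2 (P, R) h pq hpqV hne).1 rfl
      obtain ⟨hle, heq⟩ := hf P hPK R hRK hPR.subset
      have hlt : f P < f R := lt_of_le_of_ne hle (fun e => hPRnV ((heq hPR.ne).mp e))
      have := hfQmax R hRK hRK'
      linarith [hfPQ]
    have hec : ElementaryCollapse K ((K.erase P).erase Q) :=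
      ⟨P, Q, hPK, hQK, hPQ, hcard, hfree, rfl⟩
    set K₁ := (K.erase P).erase Q with hK₁
    have hK₁sub : ∀ s ∈ K₁, s ∈ K := fun s hs =>
      Finset.mem_of_mem_erase (Finset.mem_of_mem_erase hs)
    have hK₁ne : ∀ s ∈ K₁, s ≠ Q ∧ s ≠ P := fun s hs =>
      ⟨(Finset.mem_erase.mp hs).1, (Finset.mem_erase.mp (Finset.mem_of_mem_erase hs)).1⟩
    have hmem₁ : ∀ s, s ∈ K → s ≠ P → s ≠ Q → s ∈ K₁ := fun s h h1 h2 =>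
      Finset.mem_erase.mpr ⟨h2, Finset.mem_erase.mpr ⟨h1, h⟩⟩
    refine Relation.ReflTransGen.head hec (ih K₁ K' (V \ {pq}) ?_ ?_ ?_ hcxK' ?_ ?_)
    · -- card
      have h1 : Q ∈ K.erase P := Finset.mem_erase.mpr ⟨hPQ.ne', hQK⟩
      have h2 : K₁.card < (K.erase P).card := Finset.card_erase_lt_of_mem h1
      have h3 := Finset.card_erase_lt_of_mem hPK
      omega
    · -- complex
      intro s hs
      have hsK := hK₁sub s hs
      obtain ⟨hsQ, hsP⟩ := hK₁ne s hs
      refine ⟨(hcxK s hsK).1, fun t hts htne => ?_⟩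
      have htK := (hcxK s hsK).2 t hts htne
      refine hmem₁ t htK ?_ ?_
      · rintro rfl
        exact hsQ (hfree s hsK (lt_of_le_of_ne hts (Ne.symm hsP)))
      · rintro rfl
        exact hsQ (hfree s hsK (hPQ.trans (lt_of_le_of_ne hts (Ne.symm hsQ))))
    · -- K' ⊆ K₁
      intro s hs
      exact hmem₁ s (hsub hs) (fun e => hp1 (e ▸ hs)) (fun e => hp2 (e ▸ hs))
    · -- gradient
      refine ⟨?_, ?_, f, ?_⟩
      · rintro ab ⟨habV, habne⟩
        obtain ⟨h1, h2, h3, h4⟩ := hV1 ab habV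
        have hne : ab ≠ pq := by simpa using habne
        obtain ⟨d1, d2, d3, d4⟩ := hV2 ab habV pq hpqV hne
        exact ⟨hmem₁ ab.1 h1 d1 d2, hmem₁ ab.2 h2 d3 d4, h3, h4⟩
      · intro ab hab cd hcd hne
        exact hV2 ab hab.1 cd hcd.1 hne
      · intro A hA B hB hAB
        have hAK : A ∈ K := hK₁sub A hA
        have hBK : B ∈ K := hK₁sub B hB
        obtain ⟨hle, heq⟩ := hf A hAK B hBK hAB
        refine ⟨hle, fun hne => ⟨fun e => ⟨(heq hne).mp e, ?_⟩,
          fun h => (heq hne).mpr h.1⟩⟩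
        intro h'
        have : A = P := congrArg Prod.fst (Set.mem_singleton_iff.mp h')
        exact (hK₁ne A hA).2 this
    · -- hdiff
      intro R hR hRK'
      obtain ⟨ab, habV, hor, h1, h2⟩ := hdiff R (hK₁sub R hR) hRK'
      refine ⟨ab, ⟨habV, fun he => ?_⟩, hor, h1, h2⟩
      have he' : ab = pq := Set.mem_singleton_iff.mp he
      obtain ⟨hRQ, hRP⟩ := hK₁ne R hR
      rcases hor with h | h
      · exact hRP (h.trans (congrArg Prod.fst he'))
      · exact hRQ (h.trans (congrArg Prod.snd he'))

/-- **Collapsing Theorem.**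
Let `K` be a finite simplicial complex with a discrete gradient with pair set `V`, and
`K' ⊆ K` a subcomplex.  If `K \ K'` is a union of pairs of `V`, then `K ↘ K'`. -/
theorem collapsing_theorem {α : Type*} [DecidableEq α]
    (K K' : Finset (Finset α))
    (hcxK : ∀ s ∈ K, s.Nonempty ∧ ∀ t : Finset α, t ⊆ s → t.Nonempty → t ∈ K)
    (hsub : K' ⊆ K)
    (hcxK' : ∀ s ∈ K', ∀ t : Finset α, t ⊆ s → t.Nonempty → t ∈ K')
    (V : Set (Finset α × Finset α))
    (hgrad : IsDiscreteGradient {s : Finset α | s ∈ K} V)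
    (hdiff : ∀ Q ∈ K, Q ∉ K' →
      ∃ pq ∈ V, (Q = pq.1 ∨ Q = pq.2) ∧ pq.1 ∉ K' ∧ pq.2 ∉ K') :
    Collapses K K' :=
  collapse_aux K.card K K' V le_rfl hcxK hsub hcxK' hgrad hdiff
end

section
/- Selective Delaunay Collapsing (second collapse, homotopy-level consequence): for X ⊆ ℝⁿ finite in general position, E ⊆ F ⊆ X, and r ∈ ℝ, every simplex Q that lies in Del(r,X,E) ∩ Del(X,F) but not in Del(r,X,F) belongs to a non-singular interval [Front, Incl] common to the gradients of the radius functions r_E and r_F; consequently the set Del(r,X,E) ∩ Del(X,F) \ Del(r,X,F) is partitioned into nonempty intervals [P,R] with P ⊊ R of the face poset, each entirely contained in this difference. -/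
/-- `Q` belongs to the selective Delaunay complex `Del(r, X, E)`: the smallest sphere
including `Q` and excluding `E` exists and has squared radius at most `r²`. -/
def MemDel {n : ℕ} (r : ℝ) (X E : Finset (EuclideanSpace ℝ (Fin n)))
    (Q : Finset (EuclideanSpace ℝ (Fin n))) : Prop :=
  Q.Nonempty ∧ Q ⊆ X ∧
    ∃ (z : EuclideanSpace ℝ (Fin n)) (s : ℝ), IsSmallestSphere Q E z s ∧ s ≤ r ^ 2

/-- `Q` belongs to `Del(X, E) = Del(∞, X, E)`: some sphere includes `Q` and excludes `E`. -/
def MemDelInf {n : ℕ} (X E : Finset (EuclideanSpace ℝ (Fin n)))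
    (Q : Finset (EuclideanSpace ℝ (Fin n))) : Prop :=
  Q.Nonempty ∧ Q ⊆ X ∧
    ∃ (z : EuclideanSpace ℝ (Fin n)) (s : ℝ), IsSmallestSphere Q E z s

/-- General position: any at most `n + 1` points of `X` are affinely independent, and no
point of `X` outside such a subset `Q` lies on the smallest circumsphere of `Q`. -/
def GenPos {n : ℕ} (X : Finset (EuclideanSpace ℝ (Fin n))) : Prop :=
  ∀ Q : Finset (EuclideanSpace ℝ (Fin n)), Q ⊆ X → Q.card ≤ n + 1 →
    AffineIndependent ℝ (fun q : (Q : Set (EuclideanSpace ℝ (Fin n))) =>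
      (q : EuclideanSpace ℝ (Fin n))) ∧
    ∀ (z : EuclideanSpace ℝ (Fin n)) (s : ℝ),
      z ∈ affineSpan ℝ (Q : Set (EuclideanSpace ℝ (Fin n))) →
      (∀ q ∈ Q, dist z q ^ 2 = s) → ∀ p ∈ X, p ∉ Q → dist z p ^ 2 ≠ s

noncomputable section SDCAux
open Finset RealInnerProductSpace
attribute [local instance 10] Classical.propDecidable
namespace SDC
variable {n : ℕ}

/-- points of `X` on the sphere `(z,s)` -/
def sphA (X : Finset (EuclideanSpace ℝ (Fin n))) (z : EuclideanSpace ℝ (Fin n)) (s : ℝ) :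
    Finset (EuclideanSpace ℝ (Fin n)) := X.filter (fun x => dist z x ^ 2 = s)

/-- points of `X` on or inside the sphere `(z,s)` -/
def Rin (X : Finset (EuclideanSpace ℝ (Fin n))) (z : EuclideanSpace ℝ (Fin n)) (s : ℝ) :
    Finset (EuclideanSpace ℝ (Fin n)) := X.filter (fun x => dist z x ^ 2 ≤ s)

/-- an affine representation of `z` by points of `X` on the sphere, if one exists -/
def wght (X : Finset (EuclideanSpace ℝ (Fin n))) (z : EuclideanSpace ℝ (Fin n)) (s : ℝ) :
    EuclideanSpace ℝ (Fin n) → ℝ :=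
  if h : ∃ w : EuclideanSpace ℝ (Fin n) → ℝ,
      (∑ x ∈ sphA X z s, w x = 1) ∧ (∑ x ∈ sphA X z s, w x • x = z) then h.choose else 0

/-- the "front face" of the sphere `(z,s)`: points of positive weight -/
def Pfront (X : Finset (EuclideanSpace ℝ (Fin n))) (z : EuclideanSpace ℝ (Fin n)) (s : ℝ) :
    Finset (EuclideanSpace ℝ (Fin n)) := (sphA X z s).filter (fun x => 0 < wght X z s x)

lemma dist_sq_expand (y x : EuclideanSpace ℝ (Fin n)) :
    dist y x ^ 2 = ‖y‖ ^ 2 - 2 * ⟪y, x⟫ + ‖x‖ ^ 2 := by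
  rw [dist_eq_norm]; exact norm_sub_sq_real y x

lemma sum_w_dist_sq {A : Finset (EuclideanSpace ℝ (Fin n))} {w : EuclideanSpace ℝ (Fin n) → ℝ}
    (h1 : ∑ x ∈ A, w x = 1) {z : EuclideanSpace ℝ (Fin n)}
    (hz : ∑ x ∈ A, w x • x = z) (y : EuclideanSpace ℝ (Fin n)) :
    ∑ x ∈ A, w x * dist y x ^ 2 = dist y z ^ 2 + ∑ x ∈ A, w x * dist z x ^ 2 := by
  have exp : ∀ u : EuclideanSpace ℝ (Fin n), ∑ x ∈ A, w x * dist u x ^ 2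
      = ‖u‖ ^ 2 - 2 * ⟪u, z⟫ + ∑ x ∈ A, w x * ‖x‖ ^ 2 := by
    intro u
    have hz' : ⟪u, z⟫ = ∑ x ∈ A, w x * ⟪u, x⟫ := by
      rw [← hz, inner_sum]
      exact Finset.sum_congr rfl fun x _ => real_inner_smul_right u x (w x)
    calc ∑ x ∈ A, w x * dist u x ^ 2
        = ∑ x ∈ A, (w x * ‖u‖ ^ 2 - 2 * (w x * ⟪u, x⟫) + w x * ‖x‖ ^ 2) := by
          refine Finset.sum_congr rfl fun x _ => ?_
          rw [dist_sq_expand]; ring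
      _ = (∑ x ∈ A, w x) * ‖u‖ ^ 2 - 2 * ∑ x ∈ A, w x * ⟪u, x⟫ + ∑ x ∈ A, w x * ‖x‖ ^ 2 := by
          rw [Finset.sum_add_distrib, Finset.sum_sub_distrib, ← Finset.sum_mul,
            ← Finset.mul_sum]
      _ = ‖u‖ ^ 2 - 2 * ⟪u, z⟫ + ∑ x ∈ A, w x * ‖x‖ ^ 2 := by rw [h1, one_mul, hz']
  have e1 := exp y
  have e2 := exp z
  have hzz : ⟪z, z⟫ = ‖z‖ ^ 2 := real_inner_self_eq_norm_sq z
  have hyz : dist y z ^ 2 = ‖y‖ ^ 2 - 2 * ⟪y, z⟫ + ‖z‖ ^ 2 := dist_sq_expand y z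
  linarith

lemma weights_of_mem_affineSpan {S : Finset (EuclideanSpace ℝ (Fin n))}
    {z : EuclideanSpace ℝ (Fin n)} (h : z ∈ affineSpan ℝ (S : Set (EuclideanSpace ℝ (Fin n)))) :
    ∃ w : EuclideanSpace ℝ (Fin n) → ℝ, (∑ x ∈ S, w x = 1) ∧ (∑ x ∈ S, w x • x = z) := by
  classical
  have h' : z ∈ affineSpan ℝ
      (Set.range (fun i : (S : Set (EuclideanSpace ℝ (Fin n))) =>
        (i : EuclideanSpace ℝ (Fin n)))) := by
    rwa [Subtype.range_coe]
  obtain ⟨w, hw, hcomb⟩ := eq_affineCombination_of_mem_affineSpan_of_fintype h'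
  rw [Finset.affineCombination_eq_linear_combination _ _ _ hw] at hcomb
  refine ⟨fun x => if hx : x ∈ S then w ⟨x, by exact_mod_cast hx⟩ else 0, ?_, ?_⟩
  · rw [← Finset.sum_finset_coe, ← hw]
    refine Finset.sum_congr rfl fun i _ => ?_
    rw [dif_pos (by exact_mod_cast i.2)]
  · rw [← Finset.sum_finset_coe (fun x => _ • x) S, hcomb]
    refine Finset.sum_congr rfl fun i _ => ?_
    congr 1
    rw [dif_pos (by exact_mod_cast i.2)]

lemma exists_inner_eq_neg_one {S : Finset (EuclideanSpace ℝ (Fin n))}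
    {z : EuclideanSpace ℝ (Fin n)} (hS : S.Nonempty)
    (hz : z ∉ affineSpan ℝ (S : Set (EuclideanSpace ℝ (Fin n)))) :
    ∃ w : EuclideanSpace ℝ (Fin n), ∀ x ∈ S, ⟪z - x, w⟫ = -1 := by
  set N := affineSpan ℝ (S : Set (EuclideanSpace ℝ (Fin n))) with hN
  obtain ⟨x0, hx0⟩ := hS
  haveI : Nonempty N := ⟨⟨x0, subset_affineSpan ℝ _ (by exact_mod_cast hx0)⟩⟩
  set p : EuclideanSpace ℝ (Fin n) :=
    (EuclideanGeometry.orthogonalProjection N z : EuclideanSpace ℝ (Fin n)) with hp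
  have hpN : p ∈ N := (EuclideanGeometry.orthogonalProjection N z).2
  have hu : z - p ∈ N.directionᗮ := by
    have := EuclideanGeometry.vsub_orthogonalProjection_mem_direction_orthogonal N z
    simpa [vsub_eq_sub, ← hp] using this
  have hzp : z - p ≠ 0 := sub_ne_zero.2 fun h => hz (h ▸ hpN)
  have hnorm : ‖z - p‖ ^ 2 ≠ 0 := pow_ne_zero _ (norm_ne_zero_iff.2 hzp)
  refine ⟨(-(‖z - p‖ ^ 2)⁻¹) • (z - p), fun x hx => ?_⟩
  have hxN : x ∈ N := subset_affineSpan ℝ _ (by exact_mod_cast hx)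
  have hdir : p - x ∈ N.direction := by
    have := AffineSubspace.vsub_mem_direction hpN hxN
    simpa [vsub_eq_sub] using this
  have h0 : ⟪p - x, z - p⟫ = 0 := (Submodule.mem_orthogonal _ _).1 hu _ hdir
  have hdecomp : z - x = (z - p) + (p - x) := by abel
  rw [real_inner_smul_right, hdecomp, inner_add_left, real_inner_self_eq_norm_sq, h0, add_zero]
  field_simp

set_option maxHeartbeats 1000000 in
lemma perturb_contradiction {Q G : Finset (EuclideanSpace ℝ (Fin n))}
    {z : EuclideanSpace ℝ (Fin n)} {s : ℝ} (hQ : Q.Nonempty)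
    (hsm : IsSmallestSphere Q G z s) (w : EuclideanSpace ℝ (Fin n))
    (hi : ∀ q ∈ Q, dist z q ^ 2 = s → ⟪z - q, w⟫ ≤ -1)
    (he : ∀ e ∈ G, dist z e ^ 2 = s → -1 ≤ ⟪z - e, w⟫) : False := by
  obtain ⟨q0, hq0⟩ := hQ
  have hd : ∀ (t : ℝ) (x : EuclideanSpace ℝ (Fin n)), dist (z + t • w) x ^ 2
      = dist z x ^ 2 + 2 * t * ⟪z - x, w⟫ + t ^ 2 * ‖w‖ ^ 2 := by
    intro t x
    rw [dist_eq_norm, dist_eq_norm]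
    have h' : z + t • w - x = (z - x) + t • w := by abel
    rw [h', norm_add_sq_real, real_inner_smul_right, norm_smul]
    simp only [Real.norm_eq_abs, mul_pow, sq_abs]
    ring
  have ev1 : ∀ᶠ t in nhdsWithin (0:ℝ) (Set.Ioi 0),
      ∀ q ∈ Q, dist z q ^ 2 + 2 * t * (⟪z - q, w⟫ + 1) ≤ s := by
    rw [Finset.eventually_all]
    intro q hq
    by_cases hact : dist z q ^ 2 = s
    · filter_upwards [self_mem_nhdsWithin] with t ht
      have h1 := hi q hq hact
      have ht' : (0:ℝ) < t := ht
      nlinarith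
    · have hlt : dist z q ^ 2 < s := lt_of_le_of_ne (hsm.2.1 q hq) hact
      have hT : Filter.Tendsto (fun t : ℝ => dist z q ^ 2 + 2 * t * (⟪z - q, w⟫ + 1))
          (nhds 0) (nhds (dist z q ^ 2)) := by
        have hc : Continuous (fun t : ℝ => dist z q ^ 2 + 2 * t * (⟪z - q, w⟫ + 1)) := by
          continuity
        simpa using hc.tendsto 0
      exact ((hT.mono_left nhdsWithin_le_nhds).eventually_lt_const hlt).mono
        (fun t ht => le_of_lt ht)
  have ev2 : ∀ᶠ t in nhdsWithin (0:ℝ) (Set.Ioi 0),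
      ∀ e ∈ G, s ≤ dist z e ^ 2 + 2 * t * (⟪z - e, w⟫ + 1) := by
    rw [Finset.eventually_all]
    intro e heG
    by_cases hact : dist z e ^ 2 = s
    · filter_upwards [self_mem_nhdsWithin] with t ht
      have h1 := he e heG hact
      have ht' : (0:ℝ) < t := ht
      nlinarith
    · have hlt : s < dist z e ^ 2 := lt_of_le_of_ne (hsm.2.2.1 e heG) (Ne.symm hact)
      have hT : Filter.Tendsto (fun t : ℝ => dist z e ^ 2 + 2 * t * (⟪z - e, w⟫ + 1))
          (nhds 0) (nhds (dist z e ^ 2)) := by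
        have hc : Continuous (fun t : ℝ => dist z e ^ 2 + 2 * t * (⟪z - e, w⟫ + 1)) := by
          continuity
        simpa using hc.tendsto 0
      exact ((hT.mono_left nhdsWithin_le_nhds).eventually_const_lt hlt).mono
        (fun t ht => le_of_lt ht)
  have ev3 : ∀ᶠ t in nhdsWithin (0:ℝ) (Set.Ioi 0), 0 < 2 * t - t ^ 2 * ‖w‖ ^ 2 := by
    have hT : Filter.Tendsto (fun t : ℝ => t * ‖w‖ ^ 2) (nhds 0) (nhds 0) := by
      have hc : Continuous (fun t : ℝ => t * ‖w‖ ^ 2) := by continuity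
      simpa using hc.tendsto 0
    filter_upwards [(hT.mono_left nhdsWithin_le_nhds).eventually_lt_const
      (by norm_num : (0:ℝ) < 2), self_mem_nhdsWithin] with t h2 ht
    have ht' : (0:ℝ) < t := ht
    nlinarith
  obtain ⟨t, h1, h2, h3⟩ := (ev1.and (ev2.and ev3)).exists
  set zt := z + t • w with hzt
  set st := s - (2 * t - t ^ 2 * ‖w‖ ^ 2) with hst
  have hincl : ∀ q ∈ Q, dist zt q ^ 2 ≤ st := by
    intro q hq
    have := h1 q hq
    rw [hd t q]
    simp only [hst]; nlinarith [this]
  have hexcl : ∀ e ∈ G, st ≤ dist zt e ^ 2 := by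
    intro e heG
    have := h2 e heG
    rw [hd t e]
    simp only [hst]; nlinarith [this]
  have h0st : 0 ≤ st := le_trans (by positivity) (hincl q0 hq0)
  have hlt : st < s := by simp only [hst]; linarith [h3]
  linarith [hsm.2.2.2 zt st h0st hincl hexcl]

lemma weights_eq_zero {X : Finset (EuclideanSpace ℝ (Fin n))} (hGP : GenPos X)
    {A : Finset (EuclideanSpace ℝ (Fin n))} (hAX : A ⊆ X) (hcard : A.card ≤ n + 1)
    {w : EuclideanSpace ℝ (Fin n) → ℝ} (h0 : ∑ x ∈ A, w x = 0)
    (hz : ∑ x ∈ A, w x • x = 0) : ∀ x ∈ A, w x = 0 := by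
  have hind := (hGP A hAX hcard).1
  have key := affineIndependent_iff.1 hind Finset.univ
    (fun i : (A : Set (EuclideanSpace ℝ (Fin n))) => w ↑i) ?_ ?_
  · intro x hx
    exact key ⟨x, by exact_mod_cast hx⟩ (Finset.mem_univ _)
  · rw [← h0]; exact Finset.sum_finset_coe (fun x => w x) A
  · rw [show (0 : EuclideanSpace ℝ (Fin n)) = ∑ x ∈ A, w x • x from hz.symm]
    exact Finset.sum_finset_coe (fun x => w x • x) A

lemma mem_span_active {X Q G : Finset (EuclideanSpace ℝ (Fin n))}
    (hQX : Q ⊆ X) (hQ : Q.Nonempty) (hGX : G ⊆ X) {z : EuclideanSpace ℝ (Fin n)} {s : ℝ}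
    (hsm : IsSmallestSphere Q G z s) :
    z ∈ affineSpan ℝ
      (((sphA X z s).filter (fun x => x ∈ Q ∨ x ∈ G)) : Set (EuclideanSpace ℝ (Fin n))) := by
  by_contra hz
  set Act := (sphA X z s).filter (fun x => x ∈ Q ∨ x ∈ G) with hAct
  have hmemAct : ∀ y, (y ∈ Q ∨ y ∈ G) → y ∈ X → dist z y ^ 2 = s → y ∈ Act := by
    intro y h1 h2 h3
    rw [hAct, Finset.mem_filter]
    exact ⟨Finset.mem_filter.2 ⟨h2, h3⟩, h1⟩
  rcases Finset.eq_empty_or_nonempty Act with hemp | hne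
  · refine perturb_contradiction hQ hsm 0 ?_ ?_
    · intro q hq hact
      have hq' : q ∈ Act := hmemAct q (Or.inl hq) (hQX hq) hact
      rw [hemp] at hq'; exact absurd hq' (Finset.notMem_empty q)
    · intro e heG hact
      have he' : e ∈ Act := hmemAct e (Or.inr heG) (hGX heG) hact
      rw [hemp] at he'; exact absurd he' (Finset.notMem_empty e)
  · obtain ⟨w, hw⟩ := exists_inner_eq_neg_one hne hz
    refine perturb_contradiction hQ hsm w ?_ ?_
    · intro q hq hact; exact le_of_eq (hw q (hmemAct q (Or.inl hq) (hQX hq) hact))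
    · intro e heG hact; exact ge_of_eq (hw e (hmemAct e (Or.inr heG) (hGX heG) hact))

lemma card_sphA_le {X Q G : Finset (EuclideanSpace ℝ (Fin n))} (hGP : GenPos X)
    (hQX : Q ⊆ X) (hQ : Q.Nonempty) (hGX : G ⊆ X) {z : EuclideanSpace ℝ (Fin n)} {s : ℝ}
    (hsm : IsSmallestSphere Q G z s) : (sphA X z s).card ≤ n + 1 := by
  by_contra hc
  push_neg at hc
  obtain ⟨T, hTA, hTcard⟩ := Finset.exists_subset_card_eq (le_of_lt hc)
  have hTX : T ⊆ X := hTA.trans (Finset.filter_subset _ _)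
  have hind := (hGP T hTX (le_of_eq hTcard)).1
  have hcardT : Fintype.card ((T : Set (EuclideanSpace ℝ (Fin n)))) = n + 1 := by
    simpa using hTcard
  have htop : affineSpan ℝ (T : Set (EuclideanSpace ℝ (Fin n))) = ⊤ := by
    have h2 := hind.affineSpan_eq_top_iff_card_eq_finrank_add_one.2
      (by rw [hcardT, finrank_euclideanSpace_fin])
    rwa [Subtype.range_coe] at h2
  have hnotsub : ¬ (sphA X z s ⊆ T) := by
    intro hsub
    have := Finset.card_le_card hsub; omega
  obtain ⟨p, hpA, hpT⟩ := Finset.not_subset.1 hnotsub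
  refine (hGP T hTX (le_of_eq hTcard)).2 z s (htop ▸ AffineSubspace.mem_top ℝ _ z)
    (fun q hq => (Finset.mem_filter.1 (hTA hq)).2) p ((Finset.filter_subset _ _) hpA) hpT ?_
  exact (Finset.mem_filter.1 hpA).2

lemma wght_spec {X Q G : Finset (EuclideanSpace ℝ (Fin n))}
    (hQX : Q ⊆ X) (hQ : Q.Nonempty) (hGX : G ⊆ X) {z : EuclideanSpace ℝ (Fin n)} {s : ℝ}
    (hsm : IsSmallestSphere Q G z s) :
    (∑ x ∈ sphA X z s, wght X z s x = 1) ∧ (∑ x ∈ sphA X z s, wght X z s x • x = z) := by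
  have hx : ∃ w : EuclideanSpace ℝ (Fin n) → ℝ,
      (∑ x ∈ sphA X z s, w x = 1) ∧ (∑ x ∈ sphA X z s, w x • x = z) := by
    have hspan := mem_span_active hQX hQ hGX hsm (X := X)
    have hspan' : z ∈ affineSpan ℝ ((sphA X z s : Set (EuclideanSpace ℝ (Fin n)))) :=
      affineSpan_mono ℝ (by exact_mod_cast Finset.filter_subset _ _) hspan
    exact weights_of_mem_affineSpan hspan'
  have hw : wght X z s = hx.choose := by rw [wght, dif_pos hx]
  rw [hw]
  exact hx.choose_spec

lemma wght_signs {X Q G : Finset (EuclideanSpace ℝ (Fin n))} (hGP : GenPos X)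
    (hQX : Q ⊆ X) (hQ : Q.Nonempty) (hGX : G ⊆ X) {z : EuclideanSpace ℝ (Fin n)} {s : ℝ}
    (hsm : IsSmallestSphere Q G z s) :
    ∀ x0 ∈ sphA X z s, (0 < wght X z s x0 → x0 ∈ Q) ∧ (wght X z s x0 < 0 → x0 ∈ G) := by
  obtain ⟨h1, h2⟩ := wght_spec hQX hQ hGX hsm (X := X)
  set A := sphA X z s with hA
  set lam := wght X z s with hlam
  have hAX : A ⊆ X := Finset.filter_subset _ _
  have hcard : A.card ≤ n + 1 := card_sphA_le hGP hQX hQ hGX hsm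
  intro x0 hx0
  -- first, the degenerate case A = {x0}
  by_cases hsingle : A.erase x0 = ∅
  · have hAs : A = {x0} := by
      apply Finset.eq_singleton_iff_unique_mem.2
      exact ⟨hx0, fun y hy => by
        by_contra hne
        exact Finset.notMem_empty y (hsingle ▸ Finset.mem_erase.2 ⟨hne, hy⟩)⟩
    have hl1 : lam x0 = 1 := by
      have := h1
      rw [hAs, Finset.sum_singleton] at this
      exact this
    constructor
    · intro _
      have hz : z = x0 := by
        have := h2
        rw [hAs, Finset.sum_singleton, hl1, one_smul] at this
        exact this.symm
      have hs0 : s = 0 := by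
        have := (Finset.mem_filter.1 hx0).2
        rw [← hz] at this
        simpa using this.symm
      obtain ⟨q0, hq0⟩ := hQ
      have hd := hsm.2.1 q0 hq0
      rw [hs0] at hd
      have : dist z q0 = 0 := by nlinarith [dist_nonneg (x := z) (y := q0)]
      have : q0 = x0 := by rw [← hz]; exact (dist_eq_zero.1 this).symm
      rwa [← this]
    · intro hneg; rw [hl1] at hneg; norm_num at hneg
  -- main case: A.erase x0 is nonempty
  · have hne : (A.erase x0).Nonempty := Finset.nonempty_of_ne_empty hsingle
    -- a common construction used in both sign branches, assuming lam x0 ≠ 0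
    have hmain : lam x0 ≠ 0 → ∃ w : EuclideanSpace ℝ (Fin n),
        (∀ x ∈ A.erase x0, ⟪z - x, w⟫ = -1) ∧ lam x0 * ⟪z - x0, w⟫ = 1 - lam x0 := by
      intro hl0
      have hnotspan : z ∉ affineSpan ℝ ((A.erase x0 : Set (EuclideanSpace ℝ (Fin n)))) := by
        intro hmem
        obtain ⟨w', hw1, hw2⟩ := weights_of_mem_affineSpan hmem
        have hWsum : ∑ x ∈ A, (if x ∈ A.erase x0 then w' x else 0) = 1 := by
          rw [Finset.sum_ite_mem, Finset.inter_eq_right.2 (Finset.erase_subset _ _)]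
          exact hw1
        have hWcomb : ∑ x ∈ A, (if x ∈ A.erase x0 then w' x else 0) • x = z := by
          have hcong : ∀ x ∈ A, (if x ∈ A.erase x0 then w' x else 0) • x
              = (if x ∈ A.erase x0 then w' x • x else 0) := by
            intro x _
            by_cases hx : x ∈ A.erase x0
            · rw [if_pos hx, if_pos hx]
            · rw [if_neg hx, if_neg hx, zero_smul]
          rw [Finset.sum_congr rfl hcong, Finset.sum_ite_mem,
            Finset.inter_eq_right.2 (Finset.erase_subset _ _)]
          exact hw2
        have hzero := weights_eq_zero hGP hAX hcard
          (w := fun x => lam x - (if x ∈ A.erase x0 then w' x else 0)) ?_ ?_ x0 hx0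
        · have hzero' : lam x0 - (if x0 ∈ A.erase x0 then w' x0 else 0) = 0 := hzero
          rw [if_neg (Finset.notMem_erase x0 A), sub_zero] at hzero'
          exact hl0 hzero'
        · show ∑ x ∈ A, (lam x - (if x ∈ A.erase x0 then w' x else 0)) = 0
          rw [Finset.sum_sub_distrib, h1, hWsum, sub_self]
        · show ∑ x ∈ A, (lam x - (if x ∈ A.erase x0 then w' x else 0)) • x = 0
          have hcong : ∀ x ∈ A, (lam x - (if x ∈ A.erase x0 then w' x else 0)) • x
              = lam x • x - (if x ∈ A.erase x0 then w' x else 0) • x := fun x _ => sub_smul _ _ _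
          rw [Finset.sum_congr rfl hcong, Finset.sum_sub_distrib, h2, hWcomb, sub_self]
      obtain ⟨w, hw⟩ := exists_inner_eq_neg_one hne hnotspan
      refine ⟨w, hw, ?_⟩
      have hsum0 : ∑ x ∈ A, lam x • (z - x) = 0 := by
        have expand : ∀ x ∈ A, lam x • (z - x) = lam x • z - lam x • x := by
          intro x _; rw [smul_sub]
        rw [Finset.sum_congr rfl expand, Finset.sum_sub_distrib, ← Finset.sum_smul, h1,
          one_smul, h2, sub_self]
      have hinner : ∑ x ∈ A, lam x * ⟪z - x, w⟫ = 0 := by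
        have : (0:ℝ) = ⟪(0 : EuclideanSpace ℝ (Fin n)), w⟫ := by simp
        rw [this, ← hsum0, sum_inner]
        exact Finset.sum_congr rfl fun x _ => (real_inner_smul_left (z - x) w (lam x)).symm
      have hsplit := Finset.add_sum_erase A (fun x => lam x * ⟪z - x, w⟫) hx0
      rw [hinner] at hsplit
      have herase : ∑ x ∈ A.erase x0, lam x * ⟪z - x, w⟫ = -(1 - lam x0) := by
        have : ∀ x ∈ A.erase x0, lam x * ⟪z - x, w⟫ = -(lam x) := by
          intro x hx; rw [hw x hx]; ring
        rw [Finset.sum_congr rfl this, Finset.sum_neg_distrib]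
        have : ∑ x ∈ A.erase x0, lam x = 1 - lam x0 := by
          have := Finset.add_sum_erase A lam hx0
          rw [h1] at this
          linarith
        rw [this]
      rw [herase] at hsplit
      have hsplit' : lam x0 * ⟪z - x0, w⟫ + -(1 - lam x0) = 0 := hsplit
      linarith
  -- now the two sign claims
    constructor
    · -- positive weight forces membership in Q
      intro hpos
      by_contra hx0Q
      obtain ⟨w, hw, hkey⟩ := hmain (ne_of_gt hpos)
      refine perturb_contradiction hQ hsm w ?_ ?_
      · intro q hq hact
        have hqA : q ∈ A := Finset.mem_filter.2 ⟨hQX hq, hact⟩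
        have hqne : q ≠ x0 := fun h => hx0Q (h ▸ hq)
        exact le_of_eq (hw q (Finset.mem_erase.2 ⟨hqne, hqA⟩))
      · intro e heG hact
        have heA : e ∈ A := Finset.mem_filter.2 ⟨hGX heG, hact⟩
        by_cases hcase : e = x0
        · subst hcase
          nlinarith [hkey]
        · exact ge_of_eq (hw e (Finset.mem_erase.2 ⟨hcase, heA⟩))
    · -- negative weight forces membership in G
      intro hneg
      by_contra hx0G
      obtain ⟨w, hw, hkey⟩ := hmain (ne_of_lt hneg)
      refine perturb_contradiction hQ hsm w ?_ ?_
      · intro q hq hact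
        have hqA : q ∈ A := Finset.mem_filter.2 ⟨hQX hq, hact⟩
        by_cases hcase : q = x0
        · subst hcase
          nlinarith [hkey]
        · exact le_of_eq (hw q (Finset.mem_erase.2 ⟨hcase, hqA⟩))
      · intro e heG hact
        have heA : e ∈ A := Finset.mem_filter.2 ⟨hGX heG, hact⟩
        have hene : e ≠ x0 := fun h => hx0G (h ▸ heG)
        exact ge_of_eq (hw e (Finset.mem_erase.2 ⟨hene, heA⟩))

lemma Pfront_nonempty {X Q G : Finset (EuclideanSpace ℝ (Fin n))}
    (hQX : Q ⊆ X) (hQ : Q.Nonempty) (hGX : G ⊆ X) {z : EuclideanSpace ℝ (Fin n)} {s : ℝ}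
    (hsm : IsSmallestSphere Q G z s) : (Pfront X z s).Nonempty := by
  obtain ⟨h1, _⟩ := wght_spec hQX hQ hGX hsm (X := X)
  by_contra hemp
  rw [Finset.not_nonempty_iff_eq_empty] at hemp
  have : ∀ x ∈ sphA X z s, wght X z s x ≤ 0 := by
    intro x hx
    by_contra hpos
    push_neg at hpos
    have : x ∈ Pfront X z s := Finset.mem_filter.2 ⟨hx, hpos⟩
    rw [hemp] at this
    exact Finset.notMem_empty x this
  have := Finset.sum_nonpos this
  rw [h1] at this
  norm_num at this

lemma Pfront_subset {X Q G : Finset (EuclideanSpace ℝ (Fin n))} (hGP : GenPos X)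
    (hQX : Q ⊆ X) (hQ : Q.Nonempty) (hGX : G ⊆ X) {z : EuclideanSpace ℝ (Fin n)} {s : ℝ}
    (hsm : IsSmallestSphere Q G z s) : Pfront X z s ⊆ Q := by
  intro x hx
  obtain ⟨hxA, hxpos⟩ := Finset.mem_filter.1 hx
  exact (wght_signs hGP hQX hQ hGX hsm x hxA).1 hxpos

lemma duality {X Q G : Finset (EuclideanSpace ℝ (Fin n))} (hGP : GenPos X)
    (hQX : Q ⊆ X) (hQ : Q.Nonempty) (hGX : G ⊆ X) {z : EuclideanSpace ℝ (Fin n)} {s : ℝ}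
    (hsm : IsSmallestSphere Q G z s) :
    ∀ (z' : EuclideanSpace ℝ (Fin n)) (s' : ℝ),
      (∀ q ∈ Pfront X z s, dist z' q ^ 2 ≤ s') → (∀ e ∈ G, s' ≤ dist z' e ^ 2) →
      s + dist z' z ^ 2 ≤ s' := by
  intro z' s' hincl hexcl
  obtain ⟨h1, h2⟩ := wght_spec hQX hQ hGX hsm (X := X)
  set A := sphA X z s with hA
  set lam := wght X z s with hlam
  have hid : ∑ x ∈ A, lam x * dist z' x ^ 2 = dist z' z ^ 2 + s := by
    rw [sum_w_dist_sq h1 h2 z']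
    congr 1
    have : ∀ x ∈ A, lam x * dist z x ^ 2 = lam x * s := by
      intro x hx
      rw [(Finset.mem_filter.1 hx).2]
    rw [Finset.sum_congr rfl this, ← Finset.sum_mul, h1, one_mul]
  have hbound : ∑ x ∈ A, lam x * dist z' x ^ 2 ≤ s' := by
    calc ∑ x ∈ A, lam x * dist z' x ^ 2 ≤ ∑ x ∈ A, lam x * s' := by
          refine Finset.sum_le_sum fun x hx => ?_
          rcases lt_trichotomy (lam x) 0 with hneg | hzero | hpos
          · have hxG : x ∈ G := (wght_signs hGP hQX hQ hGX hsm x hx).2 hneg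
            exact mul_le_mul_of_nonpos_left (hexcl x hxG) (le_of_lt hneg)
          · rw [hzero, zero_mul, zero_mul]
          · have hxP : x ∈ Pfront X z s := Finset.mem_filter.2 ⟨hx, hpos⟩
            exact mul_le_mul_of_nonneg_left (hincl x hxP) (le_of_lt hpos)
      _ = s' := by rw [← Finset.sum_mul, h1, one_mul]
  linarith

lemma smallest_on_interval {X Q G : Finset (EuclideanSpace ℝ (Fin n))} (hGP : GenPos X)
    (hQX : Q ⊆ X) (hQ : Q.Nonempty) (hGX : G ⊆ X) {z : EuclideanSpace ℝ (Fin n)} {s : ℝ}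
    (hsm : IsSmallestSphere Q G z s) :
    ∀ Q' : Finset (EuclideanSpace ℝ (Fin n)), Pfront X z s ⊆ Q' → Q' ⊆ Rin X z s →
      IsSmallestSphere Q' G z s := by
  intro Q' hPQ' hQ'R
  refine ⟨hsm.1, ?_, hsm.2.2.1, ?_⟩
  · intro q hq
    exact (Finset.mem_filter.1 (hQ'R hq)).2
  · intro z' s' _ hincl hexcl
    have := duality hGP hQX hQ hGX hsm z' s' (fun q hq => hincl q (hPQ' hq)) hexcl
    nlinarith [dist_nonneg (x := z') (y := z), sq_nonneg (dist z' z)]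

lemma smallest_s_eq {Q G : Finset (EuclideanSpace ℝ (Fin n))}
    {z1 z2 : EuclideanSpace ℝ (Fin n)} {s1 s2 : ℝ}
    (h1 : IsSmallestSphere Q G z1 s1) (h2 : IsSmallestSphere Q G z2 s2) : s1 = s2 :=
  le_antisymm (h1.2.2.2 z2 s2 h2.1 h2.2.1 h2.2.2.1) (h2.2.2.2 z1 s1 h1.1 h1.2.1 h1.2.2.1)

lemma smallest_z_eq {X Q G : Finset (EuclideanSpace ℝ (Fin n))} (hGP : GenPos X)
    (hQX : Q ⊆ X) (hQ : Q.Nonempty) (hGX : G ⊆ X)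
    {z1 z2 : EuclideanSpace ℝ (Fin n)} {s1 s2 : ℝ}
    (h1 : IsSmallestSphere Q G z1 s1) (h2 : IsSmallestSphere Q G z2 s2) : z1 = z2 := by
  have hs : s1 = s2 := smallest_s_eq h1 h2
  have hd := duality hGP hQX hQ hGX h1 z2 s2
    (fun q hq => h2.2.1 q (Pfront_subset hGP hQX hQ hGX h1 hq)) h2.2.2.1
  have : dist z2 z1 ^ 2 ≤ 0 := by linarith
  have : dist z2 z1 = 0 := by nlinarith [dist_nonneg (x := z2) (y := z1)]
  exact (dist_eq_zero.1 this).symm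

end SDC
end SDCAux

/-- **Selective Delaunay Collapsing (second collapse, combinatorial consequence).**
For `X` in general position, `E ⊆ F ⊆ X`, and `r ∈ ℝ`, the set of simplices lying in
`Del(r, X, E) ∩ Del(X, F)` but not in `Del(r, X, F)` is partitioned into non-singular
intervals `[P, R]` (with `P ⊊ R`) of the face poset, each entirely contained in this
difference; moreover on each such interval the smallest sphere excluding `E` and the
smallest sphere excluding `F` are constant (the intervals are common to the gradients
of the radius functions `r_E` and `r_F`). -/



theorem selective_delaunay_second_collapse_intervals (n : ℕ)
    (X E F : Finset (EuclideanSpace ℝ (Fin n)))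
    (hGP : GenPos X) (hEF : E ⊆ F) (hFX : F ⊆ X) (r : ℝ) :
    ∃ Pset : Set (Finset (EuclideanSpace ℝ (Fin n)) × Finset (EuclideanSpace ℝ (Fin n))),
      (∀ pr ∈ Pset, pr.1 ⊂ pr.2 ∧
        (∀ Q, pr.1 ⊆ Q → Q ⊆ pr.2 →
          (MemDel r X E Q ∧ MemDelInf X F Q ∧ ¬ MemDel r X F Q)) ∧
        ∃ (zE : EuclideanSpace ℝ (Fin n)) (sE : ℝ)
          (zF : EuclideanSpace ℝ (Fin n)) (sF : ℝ),
          ∀ Q, pr.1 ⊆ Q → Q ⊆ pr.2 →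
            IsSmallestSphere Q E zE sE ∧ IsSmallestSphere Q F zF sF) ∧
      ∀ Q : Finset (EuclideanSpace ℝ (Fin n)),
        MemDel r X E Q → MemDelInf X F Q → ¬ MemDel r X F Q →
          ∃! pr, pr ∈ Pset ∧ pr.1 ⊆ Q ∧ Q ⊆ pr.2 := by
  classical
  have hEX : E ⊆ X := hEF.trans hFX
  refine ⟨{ pr | ∃ (Q0 : Finset (EuclideanSpace ℝ (Fin n)))
      (zE : EuclideanSpace ℝ (Fin n)) (sE : ℝ) (zF : EuclideanSpace ℝ (Fin n)) (sF : ℝ),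
      Q0.Nonempty ∧ Q0 ⊆ X ∧ IsSmallestSphere Q0 E zE sE ∧ sE ≤ r ^ 2 ∧
      IsSmallestSphere Q0 F zF sF ∧ r ^ 2 < sF ∧
      pr = (SDC.Pfront X zE sE ∪ SDC.Pfront X zF sF,
            SDC.Rin X zE sE ∩ SDC.Rin X zF sF) }, ?_, ?_⟩
  · rintro pr ⟨Q0, zE, sE, zF, sF, hQ0ne, hQ0X, hE0, hEr, hF0, hFr, rfl⟩
    have hPEQ : SDC.Pfront X zE sE ⊆ Q0 := SDC.Pfront_subset hGP hQ0X hQ0ne hEX hE0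
    have hPFQ : SDC.Pfront X zF sF ⊆ Q0 := SDC.Pfront_subset hGP hQ0X hQ0ne hFX hF0
    have hPEne : (SDC.Pfront X zE sE).Nonempty := SDC.Pfront_nonempty hQ0X hQ0ne hEX hE0
    have hQ0RE : Q0 ⊆ SDC.Rin X zE sE := fun q hq =>
      Finset.mem_filter.2 ⟨hQ0X hq, hE0.2.1 q hq⟩
    have hQ0RF : Q0 ⊆ SDC.Rin X zF sF := fun q hq =>
      Finset.mem_filter.2 ⟨hQ0X hq, hF0.2.1 q hq⟩
    have hinterval : ∀ Q' : Finset (EuclideanSpace ℝ (Fin n)),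
        SDC.Pfront X zE sE ∪ SDC.Pfront X zF sF ⊆ Q' →
        Q' ⊆ SDC.Rin X zE sE ∩ SDC.Rin X zF sF →
        IsSmallestSphere Q' E zE sE ∧ IsSmallestSphere Q' F zF sF ∧
          Q'.Nonempty ∧ Q' ⊆ X := by
      intro Q' h1 h2
      refine ⟨SDC.smallest_on_interval hGP hQ0X hQ0ne hEX hE0 Q'
          (Finset.subset_union_left.trans h1) (h2.trans Finset.inter_subset_left),
        SDC.smallest_on_interval hGP hQ0X hQ0ne hFX hF0 Q'
          (Finset.subset_union_right.trans h1) (h2.trans Finset.inter_subset_right),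
        hPEne.mono (Finset.subset_union_left.trans h1),
        (h2.trans Finset.inter_subset_left).trans (Finset.filter_subset _ _)⟩
    refine ⟨?_, ?_, zE, sE, zF, sF, fun Q' h1 h2 => ⟨(hinterval Q' h1 h2).1,
      (hinterval Q' h1 h2).2.1⟩⟩
    · -- non-singularity
      refine Finset.ssubset_iff_subset_ne.2
        ⟨(Finset.union_subset hPEQ hPFQ).trans (Finset.subset_inter hQ0RE hQ0RF), ?_⟩
      intro heq
      have heq' : SDC.Pfront X zE sE ∪ SDC.Pfront X zF sF
          = SDC.Rin X zE sE ∩ SDC.Rin X zF sF := heq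
      obtain ⟨g1, g2⟩ := SDC.wght_spec hQ0X hQ0ne hFX hF0 (X := X)
      have hid := SDC.sum_w_dist_sq g1 g2 zE
      have hsumS : ∑ x ∈ SDC.sphA X zF sF, SDC.wght X zF sF x * dist zF x ^ 2 = sF := by
        have hcong : ∀ x ∈ SDC.sphA X zF sF,
            SDC.wght X zF sF x * dist zF x ^ 2 = SDC.wght X zF sF x * sF := by
          intro x hx
          rw [(Finset.mem_filter.1 hx).2]
        rw [Finset.sum_congr rfl hcong, ← Finset.sum_mul, g1, one_mul]
      have hbound : ∑ x ∈ SDC.sphA X zF sF, SDC.wght X zF sF x * dist zE x ^ 2 ≤ sE := by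
        calc ∑ x ∈ SDC.sphA X zF sF, SDC.wght X zF sF x * dist zE x ^ 2
            ≤ ∑ x ∈ SDC.sphA X zF sF, SDC.wght X zF sF x * sE := by
              refine Finset.sum_le_sum fun x hx => ?_
              rcases lt_trichotomy (SDC.wght X zF sF x) 0 with hneg | hzero | hpos
              · by_cases hc : sE ≤ dist zE x ^ 2
                · exact mul_le_mul_of_nonpos_left hc (le_of_lt hneg)
                · push_neg at hc
                  exfalso
                  have hxX : x ∈ X := (Finset.filter_subset _ _) hx
                  have hxRE : x ∈ SDC.Rin X zE sE :=
                    Finset.mem_filter.2 ⟨hxX, le_of_lt hc⟩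
                  have hxRF : x ∈ SDC.Rin X zF sF :=
                    Finset.mem_filter.2 ⟨hxX, le_of_eq (Finset.mem_filter.1 hx).2⟩
                  have hxP : x ∈ SDC.Pfront X zE sE ∪ SDC.Pfront X zF sF := by
                    rw [heq']; exact Finset.mem_inter.2 ⟨hxRE, hxRF⟩
                  rcases Finset.mem_union.1 hxP with hxPE | hxPF
                  · exact (ne_of_lt hc) (Finset.mem_filter.1 (Finset.mem_filter.1 hxPE).1).2
                  · exact lt_asymm hneg (Finset.mem_filter.1 hxPF).2
              · rw [hzero, zero_mul, zero_mul]
              · have hxP : x ∈ SDC.Pfront X zF sF := Finset.mem_filter.2 ⟨hx, hpos⟩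
                have hxQ0 : x ∈ Q0 := hPFQ hxP
                exact mul_le_mul_of_nonneg_left
                  ((Finset.mem_filter.1 (hQ0RE hxQ0)).2) (le_of_lt hpos)
          _ = sE := by rw [← Finset.sum_mul, g1, one_mul]
      rw [hsumS] at hid
      nlinarith [sq_nonneg (dist zE zF), hid, hbound, hEr, hFr]
    · intro Q' h1 h2
      obtain ⟨hE', hF', hne', hX'⟩ := hinterval Q' h1 h2
      refine ⟨⟨hne', hX', zE, sE, hE', hEr⟩, ⟨hne', hX', zF, sF, hF'⟩, ?_⟩
      rintro ⟨_, _, z2, s2, h2sm, h2r⟩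
      have := SDC.smallest_s_eq h2sm hF'
      linarith
  · intro Q hQE hQinf hQFn
    obtain ⟨hQne, hQX, zE, sE, hE0, hEr⟩ := hQE
    obtain ⟨-, -, zF, sF, hF0⟩ := hQinf
    have hFr : r ^ 2 < sF := by
      by_contra h
      push_neg at h
      exact hQFn ⟨hQne, hQX, zF, sF, hF0, h⟩
    have hQRE : Q ⊆ SDC.Rin X zE sE := fun q hq =>
      Finset.mem_filter.2 ⟨hQX hq, hE0.2.1 q hq⟩
    have hQRF : Q ⊆ SDC.Rin X zF sF := fun q hq =>
      Finset.mem_filter.2 ⟨hQX hq, hF0.2.1 q hq⟩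
    refine ⟨(SDC.Pfront X zE sE ∪ SDC.Pfront X zF sF,
        SDC.Rin X zE sE ∩ SDC.Rin X zF sF),
      ⟨⟨Q, zE, sE, zF, sF, hQne, hQX, hE0, hEr, hF0, hFr, rfl⟩,
        Finset.union_subset (SDC.Pfront_subset hGP hQX hQne hEX hE0)
          (SDC.Pfront_subset hGP hQX hQne hFX hF0),
        Finset.subset_inter hQRE hQRF⟩, ?_⟩
    rintro pr' ⟨⟨Q0', zE', sE', zF', sF', hne', hX', hE'0, hEr', hF'0, hFr', rfl⟩, hsub1, hsub2⟩
    have hEQ : IsSmallestSphere Q E zE' sE' :=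
      SDC.smallest_on_interval hGP hX' hne' hEX hE'0 Q
        (Finset.subset_union_left.trans hsub1) (hsub2.trans Finset.inter_subset_left)
    have hFQ : IsSmallestSphere Q F zF' sF' :=
      SDC.smallest_on_interval hGP hX' hne' hFX hF'0 Q
        (Finset.subset_union_right.trans hsub1) (hsub2.trans Finset.inter_subset_right)
    have e1 : zE' = zE := SDC.smallest_z_eq hGP hQX hQne hEX hEQ hE0
    have e2 : sE' = sE := SDC.smallest_s_eq hEQ hE0
    have e3 : zF' = zF := SDC.smallest_z_eq hGP hQX hQne hFX hFQ hF0
    have e4 : sF' = sF := SDC.smallest_s_eq hFQ hF0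
    rw [e1, e2, e3, e4]
end

section
/- Critical Simplex Corollary: Let X ⊆ ℝⁿ be finite and in general position, and Q ⊆ X with |Q| ≤ n+1. The following are equivalent: (a) the center of the smallest circumsphere of Q lies in the convex hull of Q and no point of X \ Q lies on or inside this sphere; (b) for every E ⊆ X, the smallest sphere including Q and excluding E exists and equals the smallest circumsphere of Q; (c) the squared radius of the smallest sphere including Q and excluding ∅ equals the squared radius of the smallest sphere including Q and excluding X. -/
open RealInnerProductSpace

section InnerProductSpace

variable {V : Type*} [NormedAddCommGroup V] [InnerProductSpace ℝ V]

theorem convex_setOf_dist_lt_dist (a b : V) : Convex ℝ {x : V | dist a x < dist b x} := by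
  have key : ∀ x : V, dist a x < dist b x ↔ ‖a‖ ^ 2 - ‖b‖ ^ 2 < 2 * ⟪a - b, x⟫ := by
    intro x
    rw [← sq_lt_sq₀ dist_nonneg dist_nonneg, dist_eq_norm, dist_eq_norm, norm_sub_sq_real,
      norm_sub_sq_real, inner_sub_left]
    constructor <;> intro h <;> linarith [real_inner_comm a x, real_inner_comm b x]
  simp_rw [key]
  exact convex_halfSpace_gt ((2 : ℝ) • innerₛₗ ℝ (a - b)).isLinear _

theorem exists_dist_le_dist_of_mem_convexHull {S : Set V} {z : V} (hz : z ∈ convexHull ℝ S)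
    (z' : V) : ∃ q ∈ S, dist z q ≤ dist z' q := by
  by_contra! h
  have hlt : dist z' z < dist z z := convexHull_min h (convex_setOf_dist_lt_dist z' z) hz
  rw [dist_self] at hlt
  exact hlt.not_ge dist_nonneg

theorem exists_dist_sq_add_dist_sq_le {K : Set V} (hne : K.Nonempty) (hc : IsComplete K)
    (hK : Convex ℝ K) (z : V) : ∃ v ∈ K, ∀ q ∈ K, dist z v ^ 2 + dist v q ^ 2 ≤ dist z q ^ 2 := by
  obtain ⟨v, hvK, hv⟩ := exists_norm_eq_iInf_of_complete_convex hne hc hK z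
  refine ⟨v, hvK, fun q hq => ?_⟩
  have hobtuse : ⟪z - v, q - v⟫ ≤ 0 := (norm_eq_iInf_iff_real_inner_le_zero hK hvK).1 hv q hq
  have hsplit : ‖z - q‖ ^ 2 = ‖z - v‖ ^ 2 - 2 * ⟪z - v, q - v⟫ + ‖q - v‖ ^ 2 := by
    rw [← norm_sub_sq_real, sub_sub_sub_cancel_right]
  rw [dist_eq_norm, dist_eq_norm, dist_eq_norm, hsplit, norm_sub_rev v]
  linarith

end InnerProductSpace

theorem eq_of_mem_affineSpan_of_forall_dist_sq_eq {V P : Type*} [NormedAddCommGroup V]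
    [InnerProductSpace ℝ V] [MetricSpace P] [NormedAddTorsor V P] {S : Set P} {c₁ c₂ : P}
    {s₁ s₂ : ℝ} (h₁ : c₁ ∈ affineSpan ℝ S) (h₂ : c₂ ∈ affineSpan ℝ S)
    (hs₁ : ∀ p ∈ S, dist c₁ p ^ 2 = s₁) (hs₂ : ∀ p ∈ S, dist c₂ p ^ 2 = s₂) : c₁ = c₂ := by
  have equidistant : ∀ {c : P} {s : ℝ}, (∀ p ∈ S, dist c p ^ 2 = s) →
      ∀ p ∈ S, ∀ q ∈ S, dist p c = dist q c := fun hs p hp q hq => by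
    rw [dist_comm p, dist_comm q]
    exact (pow_left_inj₀ dist_nonneg dist_nonneg two_ne_zero).1 ((hs p hp).trans (hs q hq).symm)
  have horth : vectorSpan ℝ S ≤ (ℝ ∙ (c₂ -ᵥ c₁))ᗮ := by
    rw [vectorSpan_def, Submodule.span_le]
    rintro _ ⟨q, hq, p, hp, rfl⟩
    exact Submodule.mem_orthogonal_singleton_iff_inner_right.2 <|
      EuclideanGeometry.inner_vsub_vsub_of_dist_eq_of_dist_eq
        (equidistant hs₁ p hp q hq) (equidistant hs₂ p hp q hq)
  have hmem : c₂ -ᵥ c₁ ∈ vectorSpan ℝ S :=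
    direction_affineSpan ℝ S ▸ AffineSubspace.vsub_mem_direction h₂ h₁
  have := Submodule.mem_orthogonal_singleton_iff_inner_right.1 (horth hmem)
  exact (vsub_eq_zero_iff_eq.1 (inner_self_eq_zero.1 this)).symm

section SmallestSphere

variable {n : ℕ} {X Q E : Finset (EuclideanSpace ℝ (Fin n))}

def IsCenteredDelaunaySimplex (X Q : Finset (EuclideanSpace ℝ (Fin n))) : Prop :=
  ∃ (z : EuclideanSpace ℝ (Fin n)) (s : ℝ),
    (∀ q ∈ Q, dist z q ^ 2 = s) ∧
    z ∈ convexHull ℝ (Q : Set (EuclideanSpace ℝ (Fin n))) ∧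
    ∀ p ∈ X, p ∉ Q → s < dist z p ^ 2

def CircumsphereIsSmallest (X Q : Finset (EuclideanSpace ℝ (Fin n))) : Prop :=
  ∀ E : Finset (EuclideanSpace ℝ (Fin n)), E ⊆ X →
    ∃ (z : EuclideanSpace ℝ (Fin n)) (s : ℝ), IsSmallestSphere Q E z s ∧
      (∀ q ∈ Q, dist z q ^ 2 = s) ∧
      z ∈ affineSpan ℝ (Q : Set (EuclideanSpace ℝ (Fin n)))

theorem isSmallestSphere_of_mem_convexHull {z : EuclideanSpace ℝ (Fin n)} {s : ℝ}
    (hQ : Q.Nonempty) (hs : ∀ q ∈ Q, dist z q ^ 2 = s)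
    (hz : z ∈ convexHull ℝ (Q : Set (EuclideanSpace ℝ (Fin n))))
    (hE : ∀ e ∈ E, e ∉ Q → s ≤ dist z e ^ 2) : IsSmallestSphere Q E z s := by
  obtain ⟨q₀, hq₀⟩ := hQ
  refine ⟨hs q₀ hq₀ ▸ sq_nonneg _, fun q hq => (hs q hq).le, fun e he => ?_,
    fun z' s' _ hQ' _ => ?_⟩
  · by_cases heQ : e ∈ Q
    · exact (hs e heQ).ge
    · exact hE e he heQ
  · obtain ⟨q, hq, hle⟩ := exists_dist_le_dist_of_mem_convexHull hz z'
    calc s = dist z q ^ 2 := (hs q hq).symm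
      _ ≤ dist z' q ^ 2 := by gcongr
      _ ≤ s' := hQ' q hq

theorem mem_convexHull_of_isSmallestSphere_empty {z₀ z : EuclideanSpace ℝ (Fin n)} {s : ℝ}
    (hQ : Q.Nonempty) (h₀ : IsSmallestSphere Q ∅ z₀ s) (hz : ∀ q ∈ Q, dist z q ^ 2 ≤ s) :
    z ∈ convexHull ℝ (Q : Set (EuclideanSpace ℝ (Fin n))) := by
  by_contra hzQ
  obtain ⟨v, hvQ, hv⟩ := exists_dist_sq_add_dist_sq_le
    (hQ.to_set.mono (subset_convexHull ℝ _))
    (Q.finite_toSet.isCompact_convexHull ℝ).isComplete (convex_convexHull ℝ _) z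
  have hd : 0 < dist z v ^ 2 := pow_pos (dist_pos.2 fun (h : z = v) => hzQ (h ▸ hvQ)) 2
  have hv' : ∀ q ∈ Q, dist v q ^ 2 ≤ s - dist z v ^ 2 := fun q hq => by
    linarith [hv q (subset_convexHull ℝ _ hq), hz q hq]
  obtain ⟨-, -, -, hmin⟩ := h₀
  obtain ⟨q₀, hq₀⟩ := hQ
  have := hmin v _ ((sq_nonneg _).trans (hv' q₀ hq₀)) hv' (by simp)
  linarith

theorem IsCenteredDelaunaySimplex.circumsphereIsSmallest (hQ : Q.Nonempty)
    (h : IsCenteredDelaunaySimplex X Q) : CircumsphereIsSmallest X Q := by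
  obtain ⟨z, s, hs, hz, hX⟩ := h
  exact fun E hE => ⟨z, s, isSmallestSphere_of_mem_convexHull hQ hs hz
    fun e he heQ => (hX e (hE he) heQ).le, hs, convexHull_subset_affineSpan _ hz⟩

theorem CircumsphereIsSmallest.exists_sq_radius_eq (hQ : Q.Nonempty)
    (h : CircumsphereIsSmallest X Q) :
    ∃ (z₀ : EuclideanSpace ℝ (Fin n)) (s₀ : ℝ) (z₁ : EuclideanSpace ℝ (Fin n)) (s₁ : ℝ),
      IsSmallestSphere Q ∅ z₀ s₀ ∧ IsSmallestSphere Q X z₁ s₁ ∧ s₀ = s₁ := by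
  obtain ⟨z₀, s₀, h₀, hs₀, hz₀⟩ := h ∅ (Finset.empty_subset X)
  obtain ⟨z₁, s₁, h₁, hs₁, hz₁⟩ := h X subset_rfl
  obtain rfl := eq_of_mem_affineSpan_of_forall_dist_sq_eq hz₀ hz₁ hs₀ hs₁
  obtain ⟨q, hq⟩ := hQ
  exact ⟨z₀, s₀, z₀, s₁, h₀, h₁, (hs₀ q hq).symm.trans (hs₁ q hq)⟩

theorem isCenteredDelaunaySimplex_of_exists_sq_radius_eq (hGP : GenPos X) (hQX : Q ⊆ X)
    (hQ : Q.Nonempty) (hcard : Q.card ≤ n + 1)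
    (h : ∃ (z₀ : EuclideanSpace ℝ (Fin n)) (s₀ : ℝ) (z₁ : EuclideanSpace ℝ (Fin n)) (s₁ : ℝ),
      IsSmallestSphere Q ∅ z₀ s₀ ∧ IsSmallestSphere Q X z₁ s₁ ∧ s₀ = s₁) :
    IsCenteredDelaunaySimplex X Q := by
  obtain ⟨z₀, s, z₁, _, h₀, ⟨-, hincl, hexcl, -⟩, rfl⟩ := h
  have hs : ∀ q ∈ Q, dist z₁ q ^ 2 = s := fun q hq => (hincl q hq).antisymm (hexcl q (hQX hq))
  have hz := mem_convexHull_of_isSmallestSphere_empty hQ h₀ hincl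
  refine ⟨z₁, s, hs, hz, fun p hp hpQ => (hexcl p hp).lt_of_ne' ?_⟩
  exact (hGP Q hQX hcard).2 z₁ s (convexHull_subset_affineSpan _ hz) hs p hp hpQ

end SmallestSphere

/-- **Critical Simplex Corollary.**
For `X ⊆ ℝⁿ` finite in general position and `Q ⊆ X` nonempty with at most `n + 1`
points, the following are equivalent:
(a) the center of the smallest circumsphere of `Q` lies in the convex hull of `Q` and no
    point of `X \ Q` lies on or inside this sphere (a centered Delaunay simplex);
(b) for every `E ⊆ X`, the smallest sphere including `Q` and excluding `E` exists and
    equals the smallest circumsphere of `Q`;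
(c) the smallest sphere including `Q` and excluding `∅` and the smallest sphere
    including `Q` and excluding `X` have the same squared radius. -/
theorem critical_simplex_corollary (n : ℕ)
    (X Q : Finset (EuclideanSpace ℝ (Fin n)))
    (hGP : GenPos X) (hQX : Q ⊆ X) (hQ : Q.Nonempty) (hcard : Q.card ≤ n + 1) :
    ((∃ (z : EuclideanSpace ℝ (Fin n)) (s : ℝ),
        (∀ q ∈ Q, dist z q ^ 2 = s) ∧
        z ∈ convexHull ℝ (Q : Set (EuclideanSpace ℝ (Fin n))) ∧
        ∀ p ∈ X, p ∉ Q → s < dist z p ^ 2) ↔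
      (∀ E : Finset (EuclideanSpace ℝ (Fin n)), E ⊆ X →
        ∃ (z : EuclideanSpace ℝ (Fin n)) (s : ℝ), IsSmallestSphere Q E z s ∧
          (∀ q ∈ Q, dist z q ^ 2 = s) ∧
          z ∈ affineSpan ℝ (Q : Set (EuclideanSpace ℝ (Fin n))))) ∧
    ((∀ E : Finset (EuclideanSpace ℝ (Fin n)), E ⊆ X →
        ∃ (z : EuclideanSpace ℝ (Fin n)) (s : ℝ), IsSmallestSphere Q E z s ∧
          (∀ q ∈ Q, dist z q ^ 2 = s) ∧
          z ∈ affineSpan ℝ (Q : Set (EuclideanSpace ℝ (Fin n)))) ↔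
      (∃ (z₀ : EuclideanSpace ℝ (Fin n)) (s₀ : ℝ)
          (z₁ : EuclideanSpace ℝ (Fin n)) (s₁ : ℝ),
        IsSmallestSphere Q ∅ z₀ s₀ ∧ IsSmallestSphere Q X z₁ s₁ ∧ s₀ = s₁)) := by
  have hab := IsCenteredDelaunaySimplex.circumsphereIsSmallest (X := X) hQ
  have hbc := CircumsphereIsSmallest.exists_sq_radius_eq (X := X) hQ
  have hca := isCenteredDelaunaySimplex_of_exists_sq_radius_eq hGP hQX hQ hcard
  exact ⟨⟨hab, fun hb => hca (hbc hb)⟩, ⟨hbc, fun hc => hab (hca hc)⟩⟩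
end

section
/- For the smallest sphere S (center z, squared radius s) including Q and excluding E with Q, E ⊆ X in general position, Back(S) = ∅ if and only if z lies in the convex hull of On(S) = {p ∈ Q ∪ E : ‖z−p‖² = s}. -/
/-- **Back face empty iff the center lies in the convex hull of `On(S)`.**
Let `S` (center `z`, squared radius `s`) be the smallest sphere including `Q` and
excluding `E`, let `On = {p ∈ Q ∪ E : ‖z − p‖² = s}` be the points on `S`, assumed
affinely independent (general position), and let `z = ∑_{p ∈ On} ρ_p p`, `∑ ρ_p = 1`,
be the (unique) affine representation of the center, with all `ρ_p ≠ 0`.  Then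
`Back(S) = {p ∈ On : ρ_p < 0}` is empty iff `z` lies in the convex hull of `On`. -/
theorem back_face_empty_iff_center_in_hull (n : ℕ)
    [DecidableEq (EuclideanSpace ℝ (Fin n))]
    (Q E : Finset (EuclideanSpace ℝ (Fin n)))
    (z : EuclideanSpace ℝ (Fin n)) (s : ℝ)
    (hS : IsSmallestSphere Q E z s)
    (On : Finset (EuclideanSpace ℝ (Fin n)))
    (hOn : On = (Q ∪ E).filter (fun p => dist z p ^ 2 = s))
    (hAI : AffineIndependent ℝ (fun p : (On : Set (EuclideanSpace ℝ (Fin n))) =>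
      (p : EuclideanSpace ℝ (Fin n))))
    (ρ : EuclideanSpace ℝ (Fin n) → ℝ)
    (hrep : z = ∑ p ∈ On, ρ p • p)
    (hsum : ∑ p ∈ On, ρ p = 1)
    (hne : ∀ p ∈ On, ρ p ≠ 0) :
    (On.filter (fun p => ρ p < 0) = ∅) ↔
      z ∈ convexHull ℝ (On : Set (EuclideanSpace ℝ (Fin n))) := by
  constructor
  · intro h
    rw [Finset.convexHull_eq]
    refine ⟨ρ, fun y hy => ?_, hsum, ?_⟩
    · by_contra hneg
      push_neg at hneg
      have : y ∈ On.filter (fun p => ρ p < 0) := Finset.mem_filter.mpr ⟨hy, hneg⟩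
      simp [h] at this
    · rw [Finset.centerMass_eq_of_sum_1 _ _ hsum]
      simpa using hrep.symm
  · intro h
    rw [Finset.convexHull_eq] at h
    obtain ⟨w, hw0, hw1, hwz⟩ := h
    rw [Finset.centerMass_eq_of_sum_1 _ _ hw1] at hwz
    simp only [id] at hwz
    -- uniqueness of affine representation: ρ = w on On
    have hsub : ∀ p ∈ On, ρ p = w p := by
      have hρ' : (∑ i : On, ρ (i : EuclideanSpace ℝ (Fin n))) = 1 := by
        rw [← hsum]; exact Finset.sum_attach _ _
      have hw' : (∑ i : On, w (i : EuclideanSpace ℝ (Fin n))) = 1 := by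
        rw [← hw1]; exact Finset.sum_attach _ _
      have hc1 : Finset.univ.affineCombination ℝ
          (fun p : On => (p : EuclideanSpace ℝ (Fin n)))
          (fun p : On => ρ (p : EuclideanSpace ℝ (Fin n))) = z := by
        rw [Finset.affineCombination_eq_linear_combination _ _ _ hρ']
        rw [hrep]
        exact (Finset.sum_attach On (fun p => ρ p • p))
      have hc2 : Finset.univ.affineCombination ℝ
          (fun p : On => (p : EuclideanSpace ℝ (Fin n)))
          (fun p : On => w (p : EuclideanSpace ℝ (Fin n))) = z := by
        rw [Finset.affineCombination_eq_linear_combination _ _ _ hw']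
        rw [← hwz]
        exact (Finset.sum_attach On (fun p => w p • p))
      have := hAI.indicator_eq_of_affineCombination_eq Finset.univ Finset.univ
        _ _ hρ' hw' (hc1.trans hc2.symm)
      intro p hp
      have := congrFun this ⟨p, hp⟩
      simpa using this
    apply Finset.filter_eq_empty_iff.mpr
    intro p hp
    rw [hsub p hp]
    exact not_lt.mpr (hw0 p hp)
end

section
/- Generalized Collapsing Theorem: Let K be a finite simplicial complex with a generalized discrete gradient V (a partition of K into intervals [P,R] of the face poset admitting a compatible generalized discrete Morse function), and let K' ⊆ K be a subcomplex. If K \ K' is a union of non-singular intervals of V, then K collapses simplicially onto K'. -/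
/-- `V` is a generalized discrete gradient on the simplicial complex `K`: a partition of
`K` into intervals `[P, R] = {Q : P ⊆ Q ⊆ R}` of the face poset (intervals given by their
endpoint pairs), admitting a compatible generalized discrete Morse function. -/
def IsGenDiscreteGradient {α : Type*} (K : Set (Finset α))
    (V : Set (Finset α × Finset α)) : Prop :=
  (∀ pr ∈ V, pr.1 ⊆ pr.2 ∧ ∀ Q : Finset α, pr.1 ⊆ Q → Q ⊆ pr.2 → Q ∈ K) ∧
    (∀ Q ∈ K, ∃! pr, pr ∈ V ∧ pr.1 ⊆ Q ∧ Q ⊆ pr.2) ∧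
    ∃ f : Finset α → ℝ, ∀ A ∈ K, ∀ B ∈ K, A ⊆ B →
      f A ≤ f B ∧ (f A = f B ↔ ∃ pr ∈ V, pr.1 ⊆ A ∧ B ⊆ pr.2)

lemma collapse_interval {α : Type*} [DecidableEq α] (K₂ I : Finset (Finset α))
    (P R : Finset α) (x : α) (hxR : x ∈ R) (hxP : x ∉ P)
    (hImem : ∀ S, S ∈ I ↔ P ⊆ S ∧ S ⊆ R)
    (hdisj : ∀ S ∈ I, S ∉ K₂)
    (hcl : ∀ A ∈ I, ∀ B ∈ K₂ ∪ I, A ⊆ B → B ∈ I) :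
    ∀ n (J : Finset (Finset α)), J.card ≤ n → J ⊆ I →
      (∀ T ∈ J, ∀ S ∈ I, S \ {x} ⊆ T \ {x} → S ∈ J) →
      (∀ S ∈ J, x ∉ S → insert x S ∈ J) →
      Collapses (K₂ ∪ J) K₂ := by
  intro n
  induction n with
  | zero =>
    intro J hcard _ _ _
    have : J = ∅ := Finset.card_eq_zero.mp (Nat.le_zero.mp hcard)
    rw [this, Finset.union_empty]
    exact Relation.ReflTransGen.refl
  | succ n ih =>
    intro J hcard hJI hdown hup
    rcases J.eq_empty_or_nonempty with hJ | ⟨T, hT⟩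
    · rw [hJ, Finset.union_empty]
      exact Relation.ReflTransGen.refl
    -- T \ {x} belongs to J and avoids x
    have hsdI : ∀ T' ∈ J, T' \ {x} ∈ I := by
      intro T' hT'
      obtain ⟨hPT, hTR⟩ := (hImem T').1 (hJI hT')
      exact (hImem _).2 ⟨Finset.subset_sdiff.2 ⟨hPT, by simp [Finset.disjoint_singleton_right, hxP]⟩,
        (Finset.sdiff_subset).trans hTR⟩
    have hsdJ : ∀ T' ∈ J, T' \ {x} ∈ J := fun T' hT' =>
      hdown T' hT' _ (hsdI T' hT') (by simp)
    -- pick S₀ of maximal card among members of J not containing x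
    obtain ⟨S₀, hS₀, hmax⟩ := Finset.exists_max_image (J.filter (fun S => x ∉ S))
      (fun S => S.card) ⟨T \ {x}, Finset.mem_filter.2 ⟨hsdJ T hT, by simp⟩⟩
    obtain ⟨hS₀J, hxS₀⟩ := Finset.mem_filter.1 hS₀
    obtain ⟨hPS₀, hS₀R⟩ := (hImem S₀).1 (hJI hS₀J)
    have hins : insert x S₀ ∈ J := hup S₀ hS₀J hxS₀
    have hinsI : insert x S₀ ∈ I :=
      (hImem _).2 ⟨hPS₀.trans (Finset.subset_insert _ _), Finset.insert_subset hxR hS₀R⟩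
    -- key dichotomy
    have hfree : ∀ T' ∈ J, S₀ ⊆ T' \ {x} → T' = S₀ ∨ T' = insert x S₀ := by
      intro T' hT' hsub
      have hJ' : T' \ {x} ∈ J := hsdJ T' hT'
      have hle : (T' \ {x}).card ≤ S₀.card :=
        hmax _ (Finset.mem_filter.2 ⟨hJ', by simp⟩)
      have heq : S₀ = T' \ {x} := Finset.eq_of_subset_of_card_le hsub hle
      rw [Finset.sdiff_singleton_eq_erase] at heq
      by_cases hx : x ∈ T'
      · right; rw [heq]; exact (Finset.insert_erase hx).symm
      · left; rw [heq, Finset.erase_eq_of_notMem hx]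
    have key : ∀ T' ∈ K₂ ∪ J, S₀ ⊂ T' → T' = insert x S₀ := by
      intro T' hT' hss
      have hT'I : T' ∈ I := hcl S₀ (hJI hS₀J) T'
        (by rcases Finset.mem_union.1 hT' with h | h
            · exact Finset.mem_union_left _ h
            · exact Finset.mem_union_right _ (hJI h)) hss.subset
      have hT'J : T' ∈ J := by
        rcases Finset.mem_union.1 hT' with h | h
        · exact absurd h (hdisj T' hT'I)
        · exact h
      have hsub : S₀ ⊆ T' \ {x} := Finset.subset_sdiff.2
        ⟨hss.subset, by simp [Finset.disjoint_singleton_right, hxS₀]⟩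
      rcases hfree T' hT'J hsub with h | h
      · exact absurd h hss.ne'
      · exact h
    -- the elementary collapse
    set J' := (J.erase S₀).erase (insert x S₀) with hJ'def
    have hS₀K₂ : S₀ ∉ K₂ := hdisj _ (hJI hS₀J)
    have hinsK₂ : insert x S₀ ∉ K₂ := hdisj _ hinsI
    have hL' : K₂ ∪ J' = ((K₂ ∪ J).erase S₀).erase (insert x S₀) := by
      ext s
      simp only [hJ'def, Finset.mem_union, Finset.mem_erase]
      constructor
      · rintro (h | ⟨h1, h2, h3⟩)
        · refine ⟨fun he => hinsK₂ (he ▸ h), fun he => hS₀K₂ (he ▸ h), Or.inl h⟩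
        · exact ⟨h1, h2, Or.inr h3⟩
      · rintro ⟨h1, h2, h | h⟩
        · exact Or.inl h
        · exact Or.inr ⟨h1, h2, h⟩
    have hec : ElementaryCollapse (K₂ ∪ J) (K₂ ∪ J') := by
      refine ⟨S₀, insert x S₀, Finset.mem_union_right _ hS₀J, Finset.mem_union_right _ hins,
        Finset.ssubset_insert hxS₀, Finset.card_insert_of_notMem hxS₀, key, hL'⟩
    -- recurse
    have hJ'sub : J' ⊆ J := (Finset.erase_subset _ _).trans (Finset.erase_subset _ _)
    have hcard' : J'.card ≤ n := by
      have h1 : J'.card ≤ (J.erase S₀).card := Finset.card_le_card (Finset.erase_subset _ _)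
      have h2 : (J.erase S₀).card = J.card - 1 := Finset.card_erase_of_mem hS₀J
      have h3 : 1 ≤ J.card := Finset.card_pos.2 ⟨S₀, hS₀J⟩
      omega
    have hmemJ' : ∀ s, s ∈ J' ↔ s ≠ insert x S₀ ∧ s ≠ S₀ ∧ s ∈ J := by
      intro s; simp [hJ'def, and_assoc]
    have hdown' : ∀ T' ∈ J', ∀ S ∈ I, S \ {x} ⊆ T' \ {x} → S ∈ J' := by
      intro T' hT' S hS hsub
      obtain ⟨hne1, hne2, hT'J⟩ := (hmemJ' T').1 hT'
      have hSJ : S ∈ J := hdown T' hT'J S hS hsub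
      have hbad : ¬ S₀ ⊆ T' \ {x} := by
        intro hsub0
        rcases hfree T' hT'J hsub0 with h | h
        · exact hne2 h
        · exact hne1 h
      refine (hmemJ' S).2 ⟨?_, ?_, hSJ⟩
      · intro heq
        apply hbad
        have hS0 : S₀ = S \ {x} := by
          rw [heq]; simp [Finset.sdiff_singleton_eq_erase, Finset.erase_insert hxS₀]
        rw [hS0]; exact hsub
      · intro heq
        apply hbad
        have hS0 : S₀ = S \ {x} := by
          rw [heq]; simp [Finset.sdiff_singleton_eq_erase, Finset.erase_eq_of_notMem hxS₀]
        rw [hS0]; exact hsub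
    have hup' : ∀ S ∈ J', x ∉ S → insert x S ∈ J' := by
      intro S hS hxS
      obtain ⟨hne1, hne2, hSJ⟩ := (hmemJ' S).1 hS
      refine (hmemJ' _).2 ⟨?_, ?_, hup S hSJ hxS⟩
      · intro heq
        apply hne2
        have := congrArg (fun s => Finset.erase s x) heq
        simpa [Finset.erase_insert hxS, Finset.erase_insert hxS₀] using this
      · intro heq
        exact hxS₀ (heq ▸ Finset.mem_insert_self x S)
    exact Relation.ReflTransGen.head hec (ih J' hcard' (hJ'sub.trans hJI) hdown' hup')

lemma gen_aux {α : Type*} [DecidableEq α] :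
    ∀ (n : ℕ) (K K' : Finset (Finset α)) (V : Set (Finset α × Finset α)),
    (K \ K').card ≤ n →
    (∀ s ∈ K, s.Nonempty ∧ ∀ t : Finset α, t ⊆ s → t.Nonempty → t ∈ K) →
    K' ⊆ K →
    (∀ s ∈ K', ∀ t : Finset α, t ⊆ s → t.Nonempty → t ∈ K') →
    IsGenDiscreteGradient {s : Finset α | s ∈ K} V →
    (∀ Q ∈ K, Q ∉ K' →
      ∃ pr ∈ V, pr.1 ⊆ Q ∧ Q ⊆ pr.2 ∧ pr.1 ≠ pr.2 ∧
        ∀ Q' : Finset α, pr.1 ⊆ Q' → Q' ⊆ pr.2 → Q' ∉ K') →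
    Collapses K K' := by
  intro n
  induction n with
  | zero =>
    intro K K' V hn hcxK hsub hcxK' hgrad hdiff
    have : K \ K' = ∅ := Finset.card_eq_zero.mp (Nat.le_zero.mp hn)
    have hKK : K = K' := Finset.Subset.antisymm (Finset.sdiff_eq_empty_iff_subset.mp this) hsub
    rw [hKK]
    exact Relation.ReflTransGen.refl
  | succ n ih =>
    intro K K' V hn hcxK hsub hcxK' hgrad hdiff
    by_cases hKK : K \ K' = ∅
    · rw [Finset.Subset.antisymm (Finset.sdiff_eq_empty_iff_subset.mp hKK) hsub]
      exact Relation.ReflTransGen.refl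
    obtain ⟨f, hf⟩ := hgrad.2.2
    obtain ⟨Qm, hQm, hQmax⟩ := Finset.exists_max_image (K \ K') f
      (Finset.nonempty_of_ne_empty hKK)
    obtain ⟨hQmK, hQmK'⟩ := Finset.mem_sdiff.mp hQm
    obtain ⟨pr, hprV, hpr1, hpr2, hprne, hprK'⟩ := hdiff Qm hQmK hQmK'
    obtain ⟨hPR, hint⟩ := hgrad.1 pr hprV
    set P := pr.1 with hPdef
    set R := pr.2 with hRdef
    have hintK : ∀ S : Finset α, P ⊆ S → S ⊆ R → S ∈ K := fun S h1 h2 => hint S h1 h2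
    set I : Finset (Finset α) := K.filter (fun S => P ⊆ S ∧ S ⊆ R) with hIdef
    have hImem : ∀ S, S ∈ I ↔ P ⊆ S ∧ S ⊆ R := by
      intro S
      simp only [hIdef, Finset.mem_filter, and_iff_right_iff_imp]
      rintro ⟨h1, h2⟩; exact hintK S h1 h2
    have hPK : P ∈ K := hintK P subset_rfl hPR
    have hRK : R ∈ K := hintK R hPR subset_rfl
    -- uniqueness of intervals containing a simplex
    have huni : ∀ Q ∈ K, ∀ p₁ ∈ V, ∀ p₂ ∈ V, p₁.1 ⊆ Q → Q ⊆ p₁.2 →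
        p₂.1 ⊆ Q → Q ⊆ p₂.2 → p₁ = p₂ := by
      intro Q hQ p₁ h₁ p₂ h₂ a b c d
      obtain ⟨p, _, hup⟩ := hgrad.2.1 Q hQ
      rw [hup p₁ ⟨h₁, a, b⟩, hup p₂ ⟨h₂, c, d⟩]
    -- f is constant on the interval
    have hfconst : ∀ A, P ⊆ A → A ⊆ R → f A = f P := by
      intro A h1 h2
      have hAK : A ∈ K := hintK A h1 h2
      have e1 := hf P hPK A hAK h1
      have e2 := hf A hAK R hRK h2
      have e3 : f P = f R := (hf P hPK R hRK hPR).2.mpr ⟨pr, hprV, subset_rfl, subset_rfl⟩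
      have := e1.1; have := e2.1
      linarith
    have hIK' : ∀ S ∈ I, S ∉ K' := fun S hS =>
      hprK' S ((hImem S).1 hS).1 ((hImem S).1 hS).2
    -- closure: cofaces in K of interval members stay in the interval
    have hcl : ∀ A ∈ I, ∀ B ∈ K, A ⊆ B → B ∈ I := by
      intro A hA B hB hAB
      obtain ⟨hPA, hAR⟩ := (hImem A).1 hA
      have hAK : A ∈ K := hintK A hPA hAR
      have hPne : P.Nonempty := (hcxK P hPK).1
      have hBK' : B ∉ K' := by
        intro hB'
        exact hIK' A hA (hcxK' B hB' A hAB (hPne.mono hPA))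
      have hfB : f B ≤ f Qm := hQmax B (Finset.mem_sdiff.mpr ⟨hB, hBK'⟩)
      have hfAB := hf A hAK B hB hAB
      have hfAQ : f A = f Qm := by rw [hfconst A hPA hAR, hfconst Qm hpr1 hpr2]
      have heq : f A = f B := le_antisymm hfAB.1 (by linarith [hfAB.1])
      obtain ⟨p, hpV, hp1, hp2⟩ := hfAB.2.1 heq
      have hpp : p = pr := huni A hAK p hpV pr hprV hp1 (hAB.trans hp2) hPA hAR
      refine (hImem B).2 ⟨hPA.trans hAB, ?_⟩
      rw [hRdef, ← hpp]; exact hp2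
    -- choose x ∈ R \ P
    obtain ⟨x, hxR, hxP⟩ := Finset.exists_of_ssubset (lt_of_le_of_ne hPR hprne)
    -- Step 1 : collapse K onto K \ I
    have hdisj : ∀ S ∈ I, S ∉ K \ I := fun S hS h => (Finset.mem_sdiff.mp h).2 hS
    have hcl' : ∀ A ∈ I, ∀ B ∈ (K \ I) ∪ I, A ⊆ B → B ∈ I := by
      intro A hA B hB hAB
      rcases Finset.mem_union.mp hB with h | h
      · exact hcl A hA B (Finset.mem_sdiff.mp h).1 hAB
      · exact hcl A hA B (hintK B ((hImem B).1 h).1 ((hImem B).1 h).2) hAB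
    have step1 : Collapses K (K \ I) := by
      have hIS : I ⊆ K := Finset.filter_subset _ _
      have h := collapse_interval (K \ I) I P R x hxR hxP hImem hdisj hcl'
        I.card I le_rfl subset_rfl (fun T _ S hS _ => hS)
        (fun S hS hxS => (hImem _).2 ⟨((hImem S).1 hS).1.trans (Finset.subset_insert _ _),
          Finset.insert_subset hxR ((hImem S).1 hS).2⟩)
      rwa [Finset.sdiff_union_of_subset hIS] at h
    -- Step 2 : recurse on K \ I with V \ {pr}
    have hPI : P ∈ I := (hImem P).2 ⟨subset_rfl, hPR⟩
    have hcard : ((K \ I) \ K').card ≤ n := by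
      have hss : (K \ I) \ K' ⊂ K \ K' := by
        constructor
        · intro s hs
          obtain ⟨hs1, hs2⟩ := Finset.mem_sdiff.mp hs
          exact Finset.mem_sdiff.mpr ⟨(Finset.mem_sdiff.mp hs1).1, hs2⟩
        · intro h
          have hP1 : P ∈ K \ K' := Finset.mem_sdiff.mpr ⟨hPK, hIK' P hPI⟩
          have := h hP1
          exact (Finset.mem_sdiff.mp (Finset.mem_sdiff.mp this).1).2 hPI
      have := Finset.card_lt_card hss
      omega
    have hnotI : ∀ Q ∈ K, ∀ p ∈ V, p ≠ pr → p.1 ⊆ Q → Q ⊆ p.2 → Q ∉ I := by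
      intro Q hQ p hp hne h1 h2 hQI
      exact hne (huni Q hQ p hp pr hprV h1 h2 ((hImem Q).1 hQI).1 ((hImem Q).1 hQI).2)
    have step2 : Collapses (K \ I) K' := by
      apply ih (K \ I) K' (V \ {pr}) hcard
      · intro s hs
        obtain ⟨hsK, hsI⟩ := Finset.mem_sdiff.mp hs
        refine ⟨(hcxK s hsK).1, fun t hts htne => ?_⟩
        refine Finset.mem_sdiff.mpr ⟨(hcxK s hsK).2 t hts htne, fun htI => hsI (hcl t htI s hsK hts)⟩
      · intro s hs
        exact Finset.mem_sdiff.mpr ⟨hsub hs, fun hsI => hIK' s hsI hs⟩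
      · exact hcxK'
      · refine ⟨?_, ?_, ⟨f, ?_⟩⟩
        · rintro p ⟨hpV, hpne⟩
          refine ⟨(hgrad.1 p hpV).1, fun Q h1 h2 => ?_⟩
          have hQK : Q ∈ K := (hgrad.1 p hpV).2 Q h1 h2
          exact Finset.mem_sdiff.mpr ⟨hQK,
            hnotI Q hQK p hpV (by simpa using hpne) h1 h2⟩
        · intro Q hQ
          have hQ2 : Q ∈ K \ I := hQ
          obtain ⟨hQK, hQI⟩ := Finset.mem_sdiff.mp hQ2
          obtain ⟨p, ⟨hpV, h1, h2⟩, hup⟩ := hgrad.2.1 Q hQK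
          have hpne : p ≠ pr := by
            intro h; subst h
            exact hQI ((hImem Q).2 ⟨h1, h2⟩)
          exact ⟨p, ⟨⟨hpV, by simpa using hpne⟩, h1, h2⟩,
            fun q hq => hup q ⟨hq.1.1, hq.2⟩⟩
        · intro A hA B hB hAB
          have hA2 : A ∈ K \ I := hA
          have hB2 : B ∈ K \ I := hB
          obtain ⟨hAK, hAI⟩ := Finset.mem_sdiff.mp hA2
          obtain ⟨hBK, _⟩ := Finset.mem_sdiff.mp hB2
          have hh := hf A hAK B hBK hAB
          refine ⟨hh.1, ?_, ?_⟩
          · intro heq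
            obtain ⟨p, hpV, h1, h2⟩ := hh.2.1 heq
            have hpne : p ≠ pr := by
              intro h; subst h
              exact hAI ((hImem A).2 ⟨h1, hAB.trans h2⟩)
            exact ⟨p, ⟨hpV, by simpa using hpne⟩, h1, h2⟩
          · rintro ⟨p, ⟨hpV, _⟩, h1, h2⟩
            exact hh.2.2 ⟨p, hpV, h1, h2⟩
      · intro Q hQ hQK'
        obtain ⟨hQK, hQI⟩ := Finset.mem_sdiff.mp hQ
        obtain ⟨p, hpV, h1, h2, h3, h4⟩ := hdiff Q hQK hQK'
        have hpne : p ≠ pr := by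
          intro h; subst h
          exact hQI ((hImem Q).2 ⟨h1, h2⟩)
        exact ⟨p, ⟨hpV, by simpa using hpne⟩, h1, h2, h3, h4⟩
    exact step1.trans step2

/-- **Generalized Collapsing Theorem.**
Let `K` be a finite simplicial complex with a generalized discrete gradient `V`, and
`K' ⊆ K` a subcomplex.  If `K \ K'` is a union of non-singular intervals of `V`, then
`K` collapses simplicially onto `K'`. -/
theorem generalized_collapsing_theorem {α : Type*} [DecidableEq α]
    (K K' : Finset (Finset α))
    (hcxK : ∀ s ∈ K, s.Nonempty ∧ ∀ t : Finset α, t ⊆ s → t.Nonempty → t ∈ K)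
    (hsub : K' ⊆ K)
    (hcxK' : ∀ s ∈ K', ∀ t : Finset α, t ⊆ s → t.Nonempty → t ∈ K')
    (V : Set (Finset α × Finset α))
    (hgrad : IsGenDiscreteGradient {s : Finset α | s ∈ K} V)
    (hdiff : ∀ Q ∈ K, Q ∉ K' →
      ∃ pr ∈ V, pr.1 ⊆ Q ∧ Q ⊆ pr.2 ∧ pr.1 ≠ pr.2 ∧
        ∀ Q' : Finset α, pr.1 ⊆ Q' → Q' ⊆ pr.2 → Q' ∉ K') :
    Collapses K K' :=
  gen_aux (K \ K').card K K' V le_rfl hcxK hsub hcxK' hgrad hdiff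
end
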